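/- arXiv:2503.21916 — 11 statements merged into one kernel-verified Lean document; each statement's English description precedes it below -/
import Mathlib

section
/- No finite tree with at least two vertices is link-irregular. -/
open SimpleGraph Finset

/-- The link of a vertex `v`: the subgraph induced by the neighborhood of `v`. -/
def SimpleGraph.link {V : Type*} (G : SimpleGraph V) (v : V) :
    SimpleGraph (G.neighborSet v) :=
  G.induce (G.neighborSet v)

/-- A graph is link-irregular if the links of any two distinct vertices are
non-isomorphic. -/
def SimpleGraph.LinkIrregular {V : Type*} (G : SimpleGraph V) : Prop :=
  ∀ u v : V, u ≠ v → ¬ Nonempty (G.link u ≃g G.link v)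

lemma tree_no_triangle {V : Type*} (G : SimpleGraph V) (hT : G.IsTree)
    {v a b : V} (hva : G.Adj v a) (hvb : G.Adj v b) (hab : G.Adj a b) : False := by
  obtain ⟨p, _, hp⟩ := hT.existsUnique_path a b
  have hne : a ≠ b := hab.ne
  have h1 : (SimpleGraph.Walk.cons hab SimpleGraph.Walk.nil).IsPath := by
    simp [SimpleGraph.Walk.cons_isPath_iff]
    exact hne
  have h2 : (SimpleGraph.Walk.cons hva.symm (SimpleGraph.Walk.cons hvb SimpleGraph.Walk.nil)).IsPath := by
    simp [SimpleGraph.Walk.cons_isPath_iff]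
    exact ⟨fun h => hvb.ne h, fun h => hva.ne h.symm, hne⟩
  have := congrArg SimpleGraph.Walk.length ((hp _ h1).trans (hp _ h2).symm)
  simp at this

/-- No finite tree with at least two vertices is link-irregular. -/
theorem tree_not_linkIrregular {V : Type*} [Fintype V] (G : SimpleGraph V)
    (hT : G.IsTree) (hn : 2 ≤ Fintype.card V) : ¬ G.LinkIrregular := by
  classical
  intro hLI
  have hbot : ∀ v : V, ∀ a b : G.neighborSet v, ¬ (G.link v).Adj a b := by
    rintro v a b hab
    exact tree_no_triangle G hT a.2 b.2 hab
  have hdeg : Function.Injective (fun v => G.degree v) := by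
    intro u v huv
    by_contra hne
    apply hLI u v hne
    have hcard : Fintype.card (G.neighborSet u) = Fintype.card (G.neighborSet v) := by
      rw [SimpleGraph.card_neighborSet_eq_degree, SimpleGraph.card_neighborSet_eq_degree]
      exact huv
    refine ⟨⟨Fintype.equivOfCardEq hcard, ?_⟩⟩
    intro a b
    constructor
    · intro h; exact (hbot v _ _ h).elim
    · intro h; exact (hbot u a b h).elim
  have hpos : ∀ v : V, 0 < G.degree v := by
    intro v
    rw [G.degree_pos_iff_exists_adj]
    obtain ⟨w, hw⟩ := Fintype.exists_ne_of_one_lt_card (by omega) v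
    obtain ⟨p⟩ := hT.isConnected.preconnected v w
    cases p with
    | nil => exact (hw rfl).elim
    | cons h _ => exact ⟨_, h⟩
  have hmem : ∀ v : V, G.degree v ∈ Finset.Icc 1 (Fintype.card V - 1) := by
    intro v
    rw [Finset.mem_Icc]
    exact ⟨hpos v, Nat.le_sub_one_of_lt (G.degree_lt_card_verts v)⟩
  have hcard := Finset.card_le_card_of_injOn (s := Finset.univ)
    (t := Finset.Icc 1 (Fintype.card V - 1)) (fun v => G.degree v)
    (fun v _ => hmem v) (fun a _ b _ h => hdeg h)
  simp [Finset.card_univ, Nat.card_Icc] at hcard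
  omega
end

section
/- If G is a link-irregular simple graph on n ≥ 2 vertices, then the number of distinct vertex degrees in G is at most n - 2; equivalently, there is no link-irregular graph of order n in which all vertices have distinct degrees or all but one vertex have distinct degrees. -/
open SimpleGraph Finset

section Auxiliary

universe u

lemma isolated_of_degree_zero {V : Type*} [Fintype V] (G : SimpleGraph V)
    [DecidableRel G.Adj] {z : V} (hz : G.degree z = 0) : ∀ x, ¬ G.Adj z x := by
  intro x hx
  have : x ∈ G.neighborFinset z := by simpa using hx
  rw [Finset.card_eq_zero.mp hz] at this
  exact absurd this (Finset.notMem_empty x)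

lemma universal_of_degree {V : Type*} [Fintype V] [DecidableEq V] (G : SimpleGraph V)
    [DecidableRel G.Adj] {w : V} (hw : G.degree w = Fintype.card V - 1) :
    ∀ x, x ≠ w → G.Adj w x := by
  have hsub : G.neighborFinset w ⊆ Finset.univ.erase w := by
    intro x hx
    rw [Finset.mem_erase]
    exact ⟨(G.ne_of_adj (by simpa using hx)).symm, Finset.mem_univ x⟩
  have hcard : (Finset.univ.erase w).card ≤ (G.neighborFinset w).card := by
    rw [Finset.card_erase_of_mem (Finset.mem_univ w), Finset.card_univ]
    rw [← hw]; rfl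
  have heq := Finset.eq_of_subset_of_card_le hsub hcard
  intro x hx
  have : x ∈ G.neighborFinset w := by
    rw [heq, Finset.mem_erase]; exact ⟨hx, Finset.mem_univ x⟩
  simpa using this

lemma link_iso_builder {V : Type*} (G : SimpleGraph V) (x y : V)
    (f : ∀ a : V, G.Adj x a → V) (g : ∀ b : V, G.Adj y b → V)
    (hf : ∀ a ha, G.Adj y (f a ha))
    (hg : ∀ b hb, G.Adj x (g b hb))
    (hgf : ∀ a ha, g (f a ha) (hf a ha) = a)
    (hfg : ∀ b hb, f (g b hb) (hg b hb) = b)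
    (hadj : ∀ a ha b hb, G.Adj (f a ha) (f b hb) ↔ G.Adj a b) :
    Nonempty (G.link x ≃g G.link y) := by
  refine ⟨⟨⟨fun a => ⟨f a a.2, hf _ _⟩, fun b => ⟨g b b.2, hg _ _⟩,
    fun a => Subtype.ext (hgf _ _), fun b => Subtype.ext (hfg _ _)⟩, ?_⟩⟩
  intro a b
  exact hadj _ _ _ _

lemma iso_of_isolated {V : Type*} (G : SimpleGraph V) {u v : V}
    (hu : ∀ x, ¬ G.Adj u x) (hv : ∀ x, ¬ G.Adj v x) :
    Nonempty (G.link u ≃g G.link v) := by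
  exact link_iso_builder G u v (fun a ha => absurd ha (hu a)) (fun b hb => absurd hb (hv b))
    (fun a ha => absurd ha (hu a)) (fun b hb => absurd hb (hv b))
    (fun a ha => absurd ha (hu a)) (fun b hb => absurd hb (hv b))
    (fun a ha => absurd ha (hu a))

lemma iso_of_universal {V : Type*} [DecidableEq V] (G : SimpleGraph V) {u v : V}
    (hne : u ≠ v) (hu : ∀ x, x ≠ u → G.Adj u x) (hv : ∀ x, x ≠ v → G.Adj v x) :
    Nonempty (G.link u ≃g G.link v) := by
  refine link_iso_builder G u v (fun a _ => if a = v then u else a)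
    (fun b _ => if b = u then v else b) ?_ ?_ ?_ ?_ ?_
  · intro a ha
    by_cases h : a = v
    · simpa [h] using hv u hne
    · simpa [h] using hv a h
  · intro b hb
    by_cases h : b = u
    · simpa [h] using hu v (Ne.symm hne)
    · simpa [h] using hu b h
  · intro a ha
    have hau : a ≠ u := fun h => G.irrefl (h ▸ ha)
    by_cases h : a = v <;> simp [h, hau, hne.symm]
  · intro b hb
    have hbv : b ≠ v := fun h => G.irrefl (h ▸ hb)
    by_cases h : b = u <;> simp [h, hbv, hne]
  · intro a ha b hb
    have hau : a ≠ u := fun h => G.irrefl (h ▸ ha)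
    have hbu : b ≠ u := fun h => G.irrefl (h ▸ hb)
    by_cases h1 : a = v <;> by_cases h2 : b = v
    · simp [h1, h2]
    · simp only [h1, if_pos rfl, if_neg h2]
      exact iff_of_true (hu b hbu) (hv b h2)
    · simp only [h2, if_pos rfl, if_neg h1]
      exact iff_of_true ((hu a hau).symm) ((hv a h1).symm)
    · simp [h1, h2]

instance comapDecRel {V : Type*} (G : SimpleGraph V) [DecidableRel G.Adj] {p : V → Prop} :
    DecidableRel (G.comap (Subtype.val : {a : V // p a} → V)).Adj :=
  fun a b => inferInstanceAs (Decidable (G.Adj a.val b.val))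

lemma linkIrregular_comap_of_universal {V : Type*} [DecidableEq V] (G : SimpleGraph V) {w : V}
    (hw : ∀ x, x ≠ w → G.Adj w x) (h : G.LinkIrregular) :
    (G.comap (Subtype.val : {a : V // a ≠ w} → V)).LinkIrregular := by
  set G' : SimpleGraph {a : V // a ≠ w} := G.comap Subtype.val with hG'
  rintro x y hne ⟨F⟩
  refine h x.val y.val (fun e => hne (Subtype.ext e)) ?_
  refine link_iso_builder G x.val y.val
    (fun a ha => if h : a = w then w else ((F ⟨⟨a, h⟩, ha⟩).val.val))
    (fun b hb => if h : b = w then w else ((F.symm ⟨⟨b, h⟩, hb⟩).val.val))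
    ?_ ?_ ?_ ?_ ?_
  · intro a ha
    by_cases hcase : a = w
    · simpa [hcase] using (hw y.val y.2).symm
    · simp only [dif_neg hcase]
      exact (F ⟨⟨a, hcase⟩, ha⟩).2
  · intro b hb
    by_cases hcase : b = w
    · simpa [hcase] using (hw x.val x.2).symm
    · simp only [dif_neg hcase]
      exact (F.symm ⟨⟨b, hcase⟩, hb⟩).2
  · intro a ha
    by_cases hcase : a = w
    · simp [hcase]
    · simp only [dif_neg hcase]
      rw [dif_neg (F ⟨⟨a, hcase⟩, ha⟩).val.2]
      show ((F.symm (F ⟨⟨a, hcase⟩, ha⟩)).val.val) = a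
      rw [F.symm_apply_apply]
  · intro b hb
    by_cases hcase : b = w
    · simp [hcase]
    · simp only [dif_neg hcase]
      rw [dif_neg (F.symm ⟨⟨b, hcase⟩, hb⟩).val.2]
      show ((F (F.symm ⟨⟨b, hcase⟩, hb⟩)).val.val) = b
      rw [F.apply_symm_apply]
  · intro a ha b hb
    by_cases h1 : a = w <;> by_cases h2 : b = w
    · subst h1; subst h2; simp
    · simp only [dif_pos h1, dif_neg h2]
      subst h1
      exact iff_of_true (hw _ (F ⟨⟨b, h2⟩, hb⟩).val.2) (hw b h2)
    · simp only [dif_neg h1, dif_pos h2]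
      subst h2
      exact iff_of_true ((hw _ (F ⟨⟨a, h1⟩, ha⟩).val.2).symm) ((hw a h1).symm)
    · simp only [dif_neg h1, dif_neg h2]
      exact F.map_rel_iff (a := ⟨⟨a, h1⟩, ha⟩) (b := ⟨⟨b, h2⟩, hb⟩)

lemma linkIrregular_comap_of_isolated {V : Type*} [DecidableEq V] (G : SimpleGraph V) {z : V}
    (hz : ∀ x, ¬ G.Adj z x) (h : G.LinkIrregular) :
    (G.comap (Subtype.val : {a : V // a ≠ z} → V)).LinkIrregular := by
  set G' : SimpleGraph {a : V // a ≠ z} := G.comap Subtype.val with hG'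
  rintro x y hne ⟨F⟩
  refine h x.val y.val (fun e => hne (Subtype.ext e)) ?_
  have hax : ∀ (a : V), G.Adj x.val a → a ≠ z := fun a ha he => hz x.val ((he ▸ ha).symm)
  have hay : ∀ (b : V), G.Adj y.val b → b ≠ z := fun b hb he => hz y.val ((he ▸ hb).symm)
  refine link_iso_builder G x.val y.val
    (fun a ha => (F ⟨⟨a, hax a ha⟩, ha⟩).val.val)
    (fun b hb => (F.symm ⟨⟨b, hay b hb⟩, hb⟩).val.val)
    (fun a ha => (F ⟨⟨a, hax a ha⟩, ha⟩).2)
    (fun b hb => (F.symm ⟨⟨b, hay b hb⟩, hb⟩).2)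
    ?_ ?_ ?_
  · intro a ha
    show ((F.symm (F ⟨⟨a, hax a ha⟩, ha⟩)).val.val) = a
    rw [F.symm_apply_apply]
  · intro b hb
    show ((F (F.symm ⟨⟨b, hay b hb⟩, hb⟩)).val.val) = b
    rw [F.apply_symm_apply]
  · intro a ha b hb
    exact F.map_rel_iff (a := ⟨⟨a, hax a ha⟩, ha⟩) (b := ⟨⟨b, hax b hb⟩, hb⟩)

lemma degree_comap_isolated {V : Type*} [Fintype V] [DecidableEq V] (G : SimpleGraph V)
    [DecidableRel G.Adj] {z : V} (hz : ∀ x, ¬ G.Adj z x) (x : {a : V // a ≠ z}) :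
    (G.comap (Subtype.val : {a : V // a ≠ z} → V)).degree x = G.degree x.val := by
  refine Finset.card_bij (fun a _ => a.val) ?_ ?_ ?_
  · intro a ha
    rw [SimpleGraph.mem_neighborFinset] at *
    exact ha
  · intro a _ b _ hab
    exact Subtype.ext hab
  · intro b hb
    rw [SimpleGraph.mem_neighborFinset] at hb
    have hbz : b ≠ z := fun he => hz x.val ((he ▸ hb).symm)
    exact ⟨⟨b, hbz⟩, by rw [SimpleGraph.mem_neighborFinset]; exact hb, rfl⟩

lemma degree_comap_universal {V : Type*} [Fintype V] [DecidableEq V] (G : SimpleGraph V)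
    [DecidableRel G.Adj] {w : V} (hw : ∀ x, x ≠ w → G.Adj w x) (x : {a : V // a ≠ w}) :
    (G.comap (Subtype.val : {a : V // a ≠ w} → V)).degree x = G.degree x.val - 1 := by
  have hmem : w ∈ G.neighborFinset x.val := by
    rw [SimpleGraph.mem_neighborFinset]
    exact (hw x.val x.2).symm
  have : (G.comap (Subtype.val : {a : V // a ≠ w} → V)).degree x
      = ((G.neighborFinset x.val).erase w).card := by
    refine Finset.card_bij (fun a _ => a.val) ?_ ?_ ?_
    · intro a ha
      rw [SimpleGraph.mem_neighborFinset] at ha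
      rw [Finset.mem_erase, SimpleGraph.mem_neighborFinset]
      exact ⟨a.2, ha⟩
    · intro a _ b _ hab
      exact Subtype.ext hab
    · intro b hb
      rw [Finset.mem_erase, SimpleGraph.mem_neighborFinset] at hb
      exact ⟨⟨b, hb.1⟩, by rw [SimpleGraph.mem_neighborFinset]; exact hb.2, rfl⟩
  rw [this, Finset.card_erase_of_mem hmem]
  rfl

lemma card_subtype_ne {V : Type u} [Fintype V] [DecidableEq V] (w : V) :
    Fintype.card {a : V // a ≠ w} = Fintype.card V - 1 := by
  rw [Fintype.card_subtype]
  rw [show Finset.univ.filter (fun a => a ≠ w) = Finset.univ.erase w from ?_]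
  · rw [Finset.card_erase_of_mem (Finset.mem_univ w), Finset.card_univ]
  · ext a; simp [Finset.mem_erase]

lemma linkIrregular_aux : ∀ (n : ℕ), ∀ {V : Type u} [Fintype V] [DecidableEq V]
    (G : SimpleGraph V) [DecidableRel G.Adj], Fintype.card V = n → 2 ≤ n →
    G.LinkIrregular →
    ((Finset.univ : Finset V).image (fun v => G.degree v)).card ≤ n - 2 := by
  intro n
  induction n using Nat.strong_induction_on with
  | _ n ih =>
  intro V _ _ G _ hcard hn h
  by_contra hcon
  push_neg at hcon
  have himage : n - 1 ≤ ((Finset.univ : Finset V).image (fun v => G.degree v)).card := by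
    omega
  have hdeg_lt : ∀ v : V, G.degree v < n := by
    intro v; rw [← hcard]; exact G.degree_lt_card_verts v
  have hni : ∀ u v : V, u ≠ v → G.degree u = 0 → G.degree v = 0 → False := by
    intro u v huv hu hv
    exact h u v huv (iso_of_isolated G (isolated_of_degree_zero G hu)
      (isolated_of_degree_zero G hv))
  have hnu : ∀ u v : V, u ≠ v → G.degree u = n - 1 → G.degree v = n - 1 → False := by
    intro u v huv hu hv
    rw [← hcard] at hu hv
    exact h u v huv (iso_of_universal G huv (universal_of_degree G hu)
      (universal_of_degree G hv))
  have hnotboth : ∀ u v : V, G.degree u = 0 → G.degree v = n - 1 → False := by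
    intro u v hu hv
    have huv : u ≠ v := by
      intro e; rw [e, hv] at hu; omega
    rw [← hcard] at hv
    have := (universal_of_degree G hv u huv).symm
    exact isolated_of_degree_zero G hu v this
  -- base case n = 2
  rcases eq_or_lt_of_le hn with hn2 | hn3
  · -- n = 2
    have hc2 : 1 < Fintype.card V := by omega
    obtain ⟨u, v, huv⟩ := Fintype.exists_pair_of_one_lt_card hc2
    have hu := hdeg_lt u
    have hv := hdeg_lt v
    by_cases hde : G.degree u = G.degree v
    · rcases (by omega : G.degree u = 0 ∨ G.degree u = 1) with h0 | h1
      · exact hni u v huv h0 (hde ▸ h0)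
      · exact hnu u v huv (by omega) (by omega)
    · rcases (by omega : G.degree u = 0 ∨ G.degree u = 1) with h0 | h1
      · exact hnotboth u v h0 (by omega)
      · exact hnotboth v u (by omega) (by omega)
  -- now n ≥ 3
  have hn3' : 3 ≤ n := by omega
  set img := (Finset.univ : Finset V).image (fun v => G.degree v) with himg
  have himg_sub : img ⊆ Finset.range n := by
    intro x hx
    rw [himg, Finset.mem_image] at hx
    obtain ⟨v, _, rfl⟩ := hx
    exact Finset.mem_range.mpr (hdeg_lt v)
  have hget : ∀ k, k ∈ img → ∃ x : V, G.degree x = k := by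
    intro k hk
    rw [himg, Finset.mem_image] at hk
    obtain ⟨v, _, hv⟩ := hk
    exact ⟨v, hv⟩
  have himgcases : img = (Finset.range n).erase 0 ∨ img = (Finset.range n).erase (n - 1) := by
    by_cases h0 : 0 ∈ img
    · right
      have hsub : img ⊆ (Finset.range n).erase (n - 1) := by
        intro x hx
        rw [Finset.mem_erase]
        refine ⟨?_, himg_sub hx⟩
        intro he
        obtain ⟨u, hu⟩ := hget 0 h0
        obtain ⟨v, hv⟩ := hget x hx
        exact hnotboth u v hu (he ▸ hv)
      refine Finset.eq_of_subset_of_card_le hsub ?_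
      rw [Finset.card_erase_of_mem (Finset.mem_range.mpr (by omega)), Finset.card_range]
      exact himage
    · left
      have hsub : img ⊆ (Finset.range n).erase 0 := by
        intro x hx
        rw [Finset.mem_erase]
        exact ⟨fun he => h0 (he ▸ hx), himg_sub hx⟩
      refine Finset.eq_of_subset_of_card_le hsub ?_
      rw [Finset.card_erase_of_mem (Finset.mem_range.mpr (by omega)), Finset.card_range]
      exact himage
  rcases himgcases with hcase | hcase
  · -- degrees are {1, ..., n-1}; there is a universal vertex
    have hwmem : n - 1 ∈ img := by
      rw [hcase, Finset.mem_erase]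
      exact ⟨by omega, Finset.mem_range.mpr (by omega)⟩
    obtain ⟨w, hw⟩ := hget _ hwmem
    have hwu : ∀ x, x ≠ w → G.Adj w x :=
      universal_of_degree G (by rw [hw, hcard])
    set G' : SimpleGraph {a : V // a ≠ w} := G.comap Subtype.val with hG'
    have hc' : Fintype.card {a : V // a ≠ w} = n - 1 := by
      rw [card_subtype_ne, hcard]
    have hli' : G'.LinkIrregular := linkIrregular_comap_of_universal G hwu h
    have hIH := ih (n - 1) (by omega) G' hc' (by omega) hli'
    have hlow : Finset.range (n - 2) ⊆
        (Finset.univ : Finset {a : V // a ≠ w}).image (fun v => G'.degree v) := by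
      intro j hj
      rw [Finset.mem_range] at hj
      have hmem : j + 1 ∈ img := by
        rw [hcase, Finset.mem_erase]
        exact ⟨by omega, Finset.mem_range.mpr (by omega)⟩
      obtain ⟨x, hx⟩ := hget _ hmem
      have hxw : x ≠ w := by
        intro e; rw [e, hw] at hx; omega
      rw [Finset.mem_image]
      refine ⟨⟨x, hxw⟩, Finset.mem_univ _, ?_⟩
      show (G.comap (Subtype.val : {a : V // a ≠ w} → V)).degree ⟨x, hxw⟩ = j
      rw [degree_comap_universal G hwu ⟨x, hxw⟩, hx]
      omega
    have := Finset.card_le_card hlow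
    rw [Finset.card_range] at this
    omega
  · -- degrees are {0, ..., n-2}; there is an isolated vertex
    have hzmem : 0 ∈ img := by
      rw [hcase, Finset.mem_erase]
      exact ⟨by omega, Finset.mem_range.mpr (by omega)⟩
    obtain ⟨z, hzdeg⟩ := hget _ hzmem
    have hz : ∀ x, ¬ G.Adj z x := isolated_of_degree_zero G hzdeg
    set G' : SimpleGraph {a : V // a ≠ z} := G.comap Subtype.val with hG'
    have hc' : Fintype.card {a : V // a ≠ z} = n - 1 := by
      rw [card_subtype_ne, hcard]
    have hli' : G'.LinkIrregular := linkIrregular_comap_of_isolated G hz h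
    have hIH := ih (n - 1) (by omega) G' hc' (by omega) hli'
    have hlow : Finset.Icc 1 (n - 2) ⊆
        (Finset.univ : Finset {a : V // a ≠ z}).image (fun v => G'.degree v) := by
      intro j hj
      rw [Finset.mem_Icc] at hj
      have hmem : j ∈ img := by
        rw [hcase, Finset.mem_erase]
        exact ⟨by omega, Finset.mem_range.mpr (by omega)⟩
      obtain ⟨x, hx⟩ := hget _ hmem
      have hxz : x ≠ z := by
        intro e; rw [e, hzdeg] at hx; omega
      rw [Finset.mem_image]
      refine ⟨⟨x, hxz⟩, Finset.mem_univ _, ?_⟩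
      show (G.comap (Subtype.val : {a : V // a ≠ z} → V)).degree ⟨x, hxz⟩ = j
      rw [degree_comap_isolated G hz ⟨x, hxz⟩]
      exact hx
    have := Finset.card_le_card hlow
    rw [Nat.card_Icc] at this
    omega

end Auxiliary

/-- A link-irregular graph on `n ≥ 2` vertices has at most `n - 2` distinct
vertex degrees. -/
theorem linkIrregular_degreeSet_card_le {V : Type*} [Fintype V] [DecidableEq V]
    (G : SimpleGraph V) [DecidableRel G.Adj] (hn : 2 ≤ Fintype.card V)
    (h : G.LinkIrregular) :
    ((Finset.univ : Finset V).image (fun v => G.degree v)).card ≤ Fintype.card V - 2 :=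
  linkIrregular_aux (Fintype.card V) G rfl hn h
end

section
/- There is no bipartite link-irregular graph. -/
open SimpleGraph Finset

/-- In any finite graph with at least two vertices, two distinct vertices share a degree. -/
lemma exists_ne_degree_eq {V : Type*} [Fintype V] (G : SimpleGraph V)
    [DecidableRel G.Adj] (hn : 2 ≤ Fintype.card V) :
    ∃ u v : V, u ≠ v ∧ G.degree u = G.degree v := by
  classical
  by_contra h
  push_neg at h
  have hinj : Function.Injective (fun v => (⟨G.degree v, G.degree_lt_card_verts v⟩ :
      Fin (Fintype.card V))) := by
    intro a b hab
    classical
  by_contra hne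
    exact h a b hne (by simpa using congrArg Fin.val hab)
  have hsurj : Function.Surjective (fun v => (⟨G.degree v, G.degree_lt_card_verts v⟩ :
      Fin (Fintype.card V))) :=
    ((Fintype.bijective_iff_injective_and_card _).2 ⟨hinj, by simp⟩).2
  obtain ⟨u, hu⟩ := hsurj ⟨Fintype.card V - 1, by omega⟩
  obtain ⟨w, hw⟩ := hsurj ⟨0, by omega⟩
  have hu' : G.degree u = Fintype.card V - 1 := congrArg Fin.val hu
  have hw' : G.degree w = 0 := congrArg Fin.val hw
  have huw : u ≠ w := by intro e; rw [e, hw'] at hu'; omega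
  -- neighborFinset u = univ.erase u
  have hsub : G.neighborFinset u ⊆ Finset.univ.erase u := by
    intro x hx
    simp only [mem_neighborFinset] at hx
    exact Finset.mem_erase.2 ⟨(G.ne_of_adj hx).symm, Finset.mem_univ x⟩
  have hcard : (Finset.univ.erase u).card = G.degree u := by
    rw [Finset.card_erase_of_mem (Finset.mem_univ u), Finset.card_univ, hu']
  have heq : G.neighborFinset u = Finset.univ.erase u :=
    Finset.eq_of_subset_of_card_le hsub (by rw [hcard, G.card_neighborFinset_eq_degree])
  have : w ∈ G.neighborFinset u := by
    rw [heq]; exact Finset.mem_erase.2 ⟨huw.symm, Finset.mem_univ w⟩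
  rw [mem_neighborFinset] at this
  have hpos : 0 < G.degree w := by
    rw [← G.card_neighborFinset_eq_degree]
    exact Finset.card_pos.2 ⟨u, by rw [mem_neighborFinset]; exact this.symm⟩
  omega

/-- There is no bipartite link-irregular graph. -/
theorem bipartite_not_linkIrregular {V : Type*} [Fintype V] (G : SimpleGraph V)
    (hbip : G.Colorable 2) (hn : 2 ≤ Fintype.card V) : ¬ G.LinkIrregular := by
  classical
  have hcf : G.CliqueFree 3 := hbip.cliqueFree (by omega)
  have hnoadj : ∀ (v : V) (a b : V), G.Adj v a → G.Adj v b → ¬ G.Adj a b := by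
    intro v a b hva hvb hab
    exact hcf {v, a, b} (SimpleGraph.is3Clique_triple_iff.2 ⟨hva, hvb, hab⟩)
  obtain ⟨u, v, huv, hdeg⟩ := exists_ne_degree_eq G hn
  intro hli
  apply hli u v huv
  have hcard : Fintype.card (G.neighborSet u) = Fintype.card (G.neighborSet v) := by
    rw [G.card_neighborSet_eq_degree, G.card_neighborSet_eq_degree, hdeg]
  refine ⟨⟨Fintype.equivOfCardEq hcard, ?_⟩⟩
  intro a b
  constructor
  · intro h
    exact absurd h (by
      simp only [SimpleGraph.link, comap_adj, Function.Embedding.coe_subtype] at *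
      exact hnoadj v _ _ (Fintype.equivOfCardEq hcard a).2 (Fintype.equivOfCardEq hcard b).2)
  · intro h
    exact absurd h (by
      simp only [SimpleGraph.link, comap_adj, Function.Embedding.coe_subtype] at *
      exact hnoadj u _ _ a.2 b.2)
end

section
/- If a finite simple graph G contains no odd cycle, then G is not link-irregular. -/
open SimpleGraph Finset

/-!
A graph without odd cycles has no triangles, so every link is edgeless and two links are
isomorphic as soon as the two vertices have the same degree. But in every graph on at least
two vertices some two vertices have the same degree: the degrees lie in `{0, …, n - 1}`, and
`0` and `n - 1` cannot both occur.
-/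

namespace SimpleGraph

variable {V : Type*} {G : SimpleGraph V}

theorem cliqueFree_three_of_forall_isCycle_not_odd
    (hodd : ∀ (v : V) (c : G.Walk v v), c.IsCycle → ¬ Odd c.length) : G.CliqueFree 3 := by
  intro s hs
  obtain ⟨u, c, hc, hlen⟩ := is3Clique_iff_exists_cycle_length_three.1 ⟨s, hs⟩
  exact hodd u c hc (hlen ▸ by decide)

theorem link_eq_bot_of_cliqueFree_three (h : G.CliqueFree 3) (v : V) : G.link v = ⊥ := by
  ext a b
  simp only [link, comap_adj, Function.Embedding.subtype_apply, bot_adj, iff_false]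
  intro hab
  exact isIndepSet_neighborSet_of_triangleFree G h v a.2 b.2 hab.ne hab

theorem nonempty_link_iso_of_degree_eq (h : G.CliqueFree 3) {u v : V}
    [Fintype (G.neighborSet u)] [Fintype (G.neighborSet v)] (hdeg : G.degree u = G.degree v) :
    Nonempty (G.link u ≃g G.link v) := by
  rw [link_eq_bot_of_cliqueFree_three h, link_eq_bot_of_cliqueFree_three h]
  have hcard : Fintype.card (G.neighborSet u) = Fintype.card (G.neighborSet v) := by
    simpa only [card_neighborSet_eq_degree] using hdeg
  exact ⟨⟨Fintype.equivOfCardEq hcard, Iff.rfl⟩⟩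

theorem exists_ne_degree_eq (G : SimpleGraph V) [Fintype V] [Nontrivial V] [DecidableRel G.Adj] :
    ∃ u v, u ≠ v ∧ G.degree u = G.degree v := by
  suffices ∃ t : Finset ℕ, #t < Fintype.card V ∧ ∀ v, G.degree v ∈ t by
    obtain ⟨t, ht, hdeg⟩ := this
    obtain ⟨u, -, v, -, huv, h⟩ :=
      exists_ne_map_eq_of_card_lt_of_maps_to (s := univ) ht fun v _ => hdeg v
    exact ⟨u, v, huv, h⟩
  have hone_lt := Fintype.one_lt_card (α := V)
  by_cases huniv : ∃ u, G.IsUniversal u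
  · obtain ⟨u, hu⟩ := huniv
    refine ⟨Icc 1 (Fintype.card V - 1), by simp only [Nat.card_Icc]; omega, fun v => ?_⟩
    have hpos : 0 < G.degree v := by
      rw [degree_pos_iff_exists_adj]
      obtain rfl | hv := eq_or_ne u v
      · obtain ⟨w, hw⟩ := exists_ne u
        exact ⟨w, hu hw.symm⟩
      · exact ⟨u, (hu hv).symm⟩
    have := G.degree_lt_card_verts v
    rw [mem_Icc]
    omega
  · simp only [not_exists] at huniv
    exact ⟨range (Fintype.card V - 1), by simp only [card_range]; omega,
      fun v => mem_range.2 ((G.degree_lt_card_sub_one v).2 (huniv v))⟩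

end SimpleGraph

/-- A finite simple graph with no odd cycle is not link-irregular. -/
theorem no_odd_cycle_not_linkIrregular {V : Type*} [Fintype V] (G : SimpleGraph V)
    (hodd : ∀ (v : V) (c : G.Walk v v), c.IsCycle → ¬ Odd c.length)
    (hn : 2 ≤ Fintype.card V) : ¬ G.LinkIrregular := by
  classical
  have : Nontrivial V := Fintype.one_lt_card_iff_nontrivial.1 hn
  have htri := cliqueFree_three_of_forall_isCycle_not_odd hodd
  obtain ⟨u, v, huv, hdeg⟩ := G.exists_ne_degree_eq
  exact fun hirr => hirr u v huv (nonempty_link_iso_of_degree_eq htri hdeg)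
end

section
/- If G is a link-irregular graph, then G contains a triangle; equivalently, every link-irregular graph has girth 3. -/
open SimpleGraph Finset

/-- Every link-irregular graph contains a triangle (equivalently, has girth 3). -/
theorem linkIrregular_has_triangle {V : Type*} [Fintype V] (G : SimpleGraph V)
    (hn : 2 ≤ Fintype.card V) (h : G.LinkIrregular) :
    ∃ a b c : V, G.Adj a b ∧ G.Adj b c ∧ G.Adj a c := by
  classical
  by_contra hno
  push_neg at hno
  -- links have no edges
  have hlink : ∀ (v : V) (x y : G.neighborSet v), ¬ (G.link v).Adj x y := by
    rintro v ⟨x, hx⟩ ⟨y, hy⟩ hadj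
    exact hno v x y hx hadj hy
  -- degree injective
  have hinj : Function.Injective (fun v => G.degree v) := by
    intro u v huv
    by_contra hne
    apply h u v hne
    have hcard : Fintype.card (G.neighborSet u) = Fintype.card (G.neighborSet v) := by
      have huv' : G.degree u = G.degree v := huv
      rw [G.card_neighborSet_eq_degree, G.card_neighborSet_eq_degree, huv']
    refine ⟨⟨Fintype.equivOfCardEq hcard, ?_⟩⟩
    intro a b
    simp only [iff_iff_implies_and_implies]
    exact ⟨fun ha => (hlink v _ _ ha).elim, fun hb => (hlink u a b hb).elim⟩
  -- pigeonhole
  set n := Fintype.card V with hcV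
  have hlt : ∀ v, G.degree v < n := fun v => G.degree_lt_card_verts v
  let f : V → Fin n := fun v => ⟨G.degree v, hlt v⟩
  have hfinj : Function.Injective f := fun a b hab => hinj (congrArg Fin.val hab)
  have hbij : Function.Bijective f :=
    (Fintype.bijective_iff_injective_and_card f).mpr ⟨hfinj, by simp [hcV]⟩
  obtain ⟨u, hu⟩ := hbij.surjective ⟨0, by omega⟩
  obtain ⟨w, hw⟩ := hbij.surjective ⟨n - 1, by omega⟩
  have hdu : G.degree u = 0 := congrArg Fin.val hu
  have hdw : G.degree w = n - 1 := congrArg Fin.val hw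
  have huw : u ≠ w := by
    intro h'; rw [h', hdw] at hdu; omega
  -- w is adjacent to all other vertices
  have hsub : G.neighborFinset w ⊆ Finset.univ.erase w := by
    intro x hx
    rw [Finset.mem_erase]
    exact ⟨fun h' => G.irrefl (h' ▸ (G.mem_neighborFinset w x).mp hx), Finset.mem_univ x⟩
  have hcardw : (G.neighborFinset w).card = (Finset.univ.erase w).card := by
    rw [G.card_neighborFinset_eq_degree, hdw, Finset.card_erase_of_mem (Finset.mem_univ w),
      Finset.card_univ]
  have heq := Finset.eq_of_subset_of_card_le hsub (le_of_eq hcardw.symm)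
  have : u ∈ G.neighborFinset w := by
    rw [heq, Finset.mem_erase]; exact ⟨huw, Finset.mem_univ u⟩
  have hadj : G.Adj w u := (G.mem_neighborFinset w u).mp this
  have : 0 < G.degree u := by
    rw [G.degree_pos_iff_exists_adj]; exact ⟨w, hadj.symm⟩
  omega
end

section
/- Any link-irregular graph on n vertices has at most n/2 vertices of degree n-2. -/
open SimpleGraph Finset

/-- If swapping `u` and `v` carries the neighborhood of `u` to that of `v`
and preserves adjacency there, the links of `u` and `v` are isomorphic. -/
def link_iso_of_swap {V : Type*} [DecidableEq V] (G : SimpleGraph V) (u v : V)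
    (hmem : ∀ a, a ∈ G.neighborSet u ↔ Equiv.swap u v a ∈ G.neighborSet v)
    (hadj : ∀ a b : V, a ∈ G.neighborSet u → b ∈ G.neighborSet u →
      (G.Adj (Equiv.swap u v a) (Equiv.swap u v b) ↔ G.Adj a b)) :
    G.link u ≃g G.link v where
  toEquiv := (Equiv.swap u v).subtypeEquiv hmem
  map_rel_iff' := by
    intro a b
    exact hadj a b a.2 b.2

/-- A link-irregular graph on `n` vertices has at most `n / 2` vertices of
degree `n - 2`. -/
theorem linkIrregular_degree_sub_two_count {V : Type*} [Fintype V]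
    (G : SimpleGraph V) [DecidableRel G.Adj] (h : G.LinkIrregular) :
    (Finset.univ.filter fun v => G.degree v + 2 = Fintype.card V).card ≤
      Fintype.card V / 2 := by
  classical
  set S := Finset.univ.filter fun v => G.degree v + 2 = Fintype.card V with hS
  -- every vertex of S has a unique non-neighbor
  have key : ∀ v ∈ S, ∃ x, x ≠ v ∧ ¬ G.Adj v x ∧ ∀ a, a ≠ v → a ≠ x → G.Adj v a := by
    intro v hv
    have hdeg : G.degree v + 2 = Fintype.card V := (mem_filter.mp hv).2
    have hvnot : v ∉ G.neighborFinset v := by simp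
    have hcard : (univ \ insert v (G.neighborFinset v)).card = 1 := by
      rw [card_sdiff_of_subset (subset_univ _), card_insert_of_notMem hvnot,
        card_neighborFinset_eq_degree, card_univ]
      omega
    obtain ⟨x, hx⟩ := card_eq_one.mp hcard
    have hxmem : x ∈ univ \ insert v (G.neighborFinset v) := hx ▸ mem_singleton_self x
    simp only [mem_sdiff, mem_insert, mem_neighborFinset, mem_univ, true_and,
      not_or] at hxmem
    refine ⟨x, hxmem.1, hxmem.2, ?_⟩
    intro a hav hax
    by_contra hadj
    have ha : a ∈ univ \ insert v (G.neighborFinset v) := by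
      simp [hav, hadj]
    rw [hx, mem_singleton] at ha
    exact hax ha
  choose! w hw1 hw2 hw3 using key
  -- vertices of S are pairwise adjacent
  have hadjS : ∀ u ∈ S, ∀ v ∈ S, u ≠ v → G.Adj u v := by
    intro u hu v hv huv
    by_contra hna
    apply h u v huv
    -- neighborhoods are both `univ \ {u, v}`
    have hwu : w u = v := by
      by_contra hne
      exact hna (hw3 u hu v (Ne.symm huv) (fun hc => hne hc.symm))
    have hwv : w v = u := by
      by_contra hne
      exact hna ((hw3 v hv u huv (fun hc => hne hc.symm)).symm)
    have hNu : ∀ a, a ∈ G.neighborSet u ↔ a ≠ u ∧ a ≠ v := by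
      intro a
      constructor
      · rintro ha
        refine ⟨ha.ne', ?_⟩
        rintro rfl; exact hna ha
      · rintro ⟨h1, h2⟩
        exact hw3 u hu a h1 (by rw [hwu]; exact h2)
    have hNv : ∀ a, a ∈ G.neighborSet v ↔ a ≠ v ∧ a ≠ u := by
      intro a
      constructor
      · rintro ha
        refine ⟨ha.ne', ?_⟩
        rintro rfl; exact hna ha.symm
      · rintro ⟨h1, h2⟩
        exact hw3 v hv a h1 (by rw [hwv]; exact h2)
    refine ⟨link_iso_of_swap G u v ?_ ?_⟩
    · intro a
      rw [hNu, hNv]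
      constructor
      · rintro ⟨h1, h2⟩
        rw [Equiv.swap_apply_of_ne_of_ne h1 h2]
        exact ⟨h2, h1⟩
      · rintro ⟨h1, h2⟩
        by_cases ha1 : a = u
        · subst ha1; rw [Equiv.swap_apply_left] at h1; exact absurd rfl h1
        by_cases ha2 : a = v
        · subst ha2; rw [Equiv.swap_apply_right] at h2; exact absurd rfl h2
        exact ⟨ha1, ha2⟩
    · intro a b ha hb
      rw [hNu] at ha hb
      rw [Equiv.swap_apply_of_ne_of_ne ha.1 ha.2,
        Equiv.swap_apply_of_ne_of_ne hb.1 hb.2]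
  -- the non-neighbor map is injective on S
  have hinj : Set.InjOn w S := by
    intro u hu v hv hwe
    by_contra huv
    apply h u v huv
    have huS : u ∈ S := hu
    have hvS : v ∈ S := hv
    set x := w u with hx
    have hxv : w v = x := hwe.symm
    have hxu_ne : x ≠ u := hw1 u huS
    have hxv_ne : x ≠ v := by rw [← hxv]; exact hw1 v hvS
    have hux : ¬ G.Adj u x := hw2 u huS
    have hvx : ¬ G.Adj v x := by rw [← hxv]; exact hw2 v hvS
    have huv_adj : G.Adj u v := hadjS u huS v hvS huv
    have hNu : ∀ a, a ∈ G.neighborSet u ↔ a ≠ u ∧ a ≠ x := by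
      intro a
      constructor
      · rintro ha
        refine ⟨ha.ne', ?_⟩
        rintro rfl; exact hux ha
      · rintro ⟨h1, h2⟩
        exact hw3 u huS a h1 h2
    have hNv : ∀ a, a ∈ G.neighborSet v ↔ a ≠ v ∧ a ≠ x := by
      intro a
      constructor
      · rintro ha
        refine ⟨ha.ne', ?_⟩
        rintro rfl; exact hvx ha
      · rintro ⟨h1, h2⟩
        exact hw3 v hvS a h1 (by rw [hxv]; exact h2)
    have hswapx : Equiv.swap u v x = x :=
      Equiv.swap_apply_of_ne_of_ne hxu_ne hxv_ne
    refine ⟨link_iso_of_swap G u v ?_ ?_⟩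
    · intro a
      rw [hNu, hNv]
      by_cases hau : a = u
      · subst hau
        rw [Equiv.swap_apply_left]
        exact iff_of_false (fun hc => hc.1 rfl) (fun hc => hc.1 rfl)
      by_cases hav : a = v
      · subst hav
        rw [Equiv.swap_apply_right]
        exact iff_of_true ⟨fun hc => huv hc.symm, fun hc => hxv_ne hc.symm⟩
          ⟨huv, Ne.symm hxu_ne⟩
      · rw [Equiv.swap_apply_of_ne_of_ne hau hav]
        exact ⟨fun hc => ⟨hav, hc.2⟩, fun hc => ⟨hau, hc.2⟩⟩
    · intro a b ha hb
      rw [hNu] at ha hb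
      by_cases hav : a = v <;> by_cases hbv : b = v
      · rw [hav, hbv]
        simp
      · rw [hav, Equiv.swap_apply_right, Equiv.swap_apply_of_ne_of_ne hb.1 hbv]
        have h1 : G.Adj u b := hw3 u huS b hb.1 hb.2
        have h2 : G.Adj v b := hw3 v hvS b hbv (by rw [hxv]; exact hb.2)
        exact iff_of_true h1 (hav ▸ h2)
      · rw [hbv, Equiv.swap_apply_right, Equiv.swap_apply_of_ne_of_ne ha.1 hav]
        have h1 : G.Adj a u := (hw3 u huS a ha.1 ha.2).symm
        have h2 : G.Adj a v := (hw3 v hvS a hav (by rw [hxv]; exact ha.2)).symm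
        exact iff_of_true h1 (hbv ▸ h2)
      · rw [Equiv.swap_apply_of_ne_of_ne ha.1 hav,
          Equiv.swap_apply_of_ne_of_ne hb.1 hbv]
  -- w maps S into the complement of S
  have himg : ∀ v ∈ S, w v ∈ univ \ S := by
    intro v hv
    rw [mem_sdiff]
    refine ⟨mem_univ _, ?_⟩
    intro hwS
    exact hw2 v hv (hadjS v hv (w v) hwS (Ne.symm (hw1 v hv)))
  have hle : S.card ≤ (univ \ S).card :=
    card_le_card_of_injOn w himg hinj
  have hsd : (univ \ S).card = Fintype.card V - S.card := by
    rw [card_sdiff_of_subset (subset_univ _), card_univ]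
  have hSn : S.card ≤ Fintype.card V := by
    rw [← card_univ]; exact card_le_card (subset_univ _)
  omega
end

section
/- If G is a link-irregular graph with n vertices, then the number of edges of G is at most (2n² - 5n + 4)/4. -/
open SimpleGraph Finset

/-- Helper to build an isomorphism of links from a suitable permutation of `V`. -/
def linkIsoAux {V : Type*} (G : SimpleGraph V) (u v : V) (e : V ≃ V)
    (hmem : ∀ x, G.Adj u x ↔ G.Adj v (e x))
    (hadj : ∀ x y : V, G.Adj u x → G.Adj u y → (G.Adj x y ↔ G.Adj (e x) (e y))) :
    G.link u ≃g G.link v where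
  toEquiv := e.subtypeEquiv fun x => by
    simpa [SimpleGraph.mem_neighborSet] using hmem x
  map_rel_iff' := @fun a b => by
    simp only [SimpleGraph.link, SimpleGraph.comap_adj, Equiv.subtypeEquiv_apply]
    exact (hadj a b a.2 b.2).symm

section Aux

variable {V : Type*} [Fintype V] [DecidableEq V] (G : SimpleGraph V) [DecidableRel G.Adj]

/-- Characterization of degree `n-1` vertices. -/
lemma adj_char_A {u : V} (hu : G.degree u + 1 = Fintype.card V) :
    ∀ x, G.Adj u x ↔ x ≠ u := by
  have hsub : G.neighborFinset u ⊆ univ.erase u := by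
    intro x hx
    rw [mem_neighborFinset] at hx
    exact Finset.mem_erase.2 ⟨hx.ne', mem_univ x⟩
  have heq : G.neighborFinset u = univ.erase u := by
    apply Finset.eq_of_subset_of_card_le hsub
    rw [Finset.card_erase_of_mem (mem_univ u), Finset.card_univ]
    have : (G.neighborFinset u).card = G.degree u := rfl
    omega
  intro x
  rw [← mem_neighborFinset, heq, Finset.mem_erase]
  simp

/-- Every degree `n-2` vertex has a unique non-neighbor. -/
lemma exists_nonNbr {u : V} (hu : G.degree u + 2 = Fintype.card V) :
    ∃ w, w ≠ u ∧ ¬ G.Adj u w ∧ ∀ x, G.Adj u x ↔ (x ≠ u ∧ x ≠ w) := by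
  have hsub : G.neighborFinset u ⊆ univ.erase u := by
    intro x hx
    rw [mem_neighborFinset] at hx
    exact Finset.mem_erase.2 ⟨hx.ne', mem_univ x⟩
  have hdeg : (G.neighborFinset u).card = G.degree u := rfl
  have hne : ((univ.erase u) \ G.neighborFinset u).Nonempty := by
    rw [← Finset.card_pos, Finset.card_sdiff_of_subset hsub, Finset.card_erase_of_mem (mem_univ u),
      Finset.card_univ]
    omega
  obtain ⟨w, hw⟩ := hne
  rw [Finset.mem_sdiff, Finset.mem_erase] at hw
  have hwu : w ≠ u := hw.1.1
  have hwn : ¬ G.Adj u w := fun hadj => hw.2 ((mem_neighborFinset _ _ _).2 hadj)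
  refine ⟨w, hwu, hwn, ?_⟩
  have heq : G.neighborFinset u = (univ.erase u).erase w := by
    apply Finset.eq_of_subset_of_card_le
    · intro x hx
      have hx' := (mem_neighborFinset _ _ _).1 hx
      refine Finset.mem_erase.2 ⟨?_, Finset.mem_erase.2 ⟨hx'.ne', mem_univ x⟩⟩
      rintro rfl; exact hwn hx'
    · rw [Finset.card_erase_of_mem (Finset.mem_erase.2 ⟨hwu, mem_univ w⟩),
        Finset.card_erase_of_mem (mem_univ u), Finset.card_univ]
      omega
  intro x
  rw [← mem_neighborFinset, heq, Finset.mem_erase, Finset.mem_erase]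
  simp [and_comm]

/-- At most one vertex of degree `n-1`. -/
lemma card_A_le (h : G.LinkIrregular) :
    (univ.filter fun v => G.degree v + 1 = Fintype.card V).card ≤ 1 := by
  rw [Finset.card_le_one]
  intro u hu v hv
  by_contra hne
  rw [Finset.mem_filter] at hu hv
  have cu := adj_char_A G hu.2
  have cv := adj_char_A G hv.2
  refine h u v hne ⟨linkIsoAux G u v (Equiv.swap u v) ?_ ?_⟩
  · intro x
    by_cases hxu : x = u
    · rw [hxu, Equiv.swap_apply_left, cu, cv]
      simp
    · by_cases hxv : x = v
      · rw [hxv, Equiv.swap_apply_right, cu, cv]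
        exact ne_comm
      · rw [Equiv.swap_apply_of_ne_of_ne hxu hxv, cu, cv]
        exact ⟨fun _ => hxv, fun _ => hxu⟩
  · intro x y hx hy
    have hxu : x ≠ u := (cu x).1 hx
    have hyu : y ≠ u := (cu y).1 hy
    by_cases hxv : x = v
    · by_cases hyv : y = v
      · rw [hxv, hyv, Equiv.swap_apply_right]
        simp
      · rw [hxv, Equiv.swap_apply_right, Equiv.swap_apply_of_ne_of_ne hyu hyv]
        exact ⟨fun _ => hy, fun _ => (cv y).2 hyv⟩
    · by_cases hyv : y = v
      · rw [hyv, Equiv.swap_apply_right, Equiv.swap_apply_of_ne_of_ne hxu hxv]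
        exact ⟨fun _ => hx.symm, fun _ => ((cv x).2 hxv).symm⟩
      · rw [Equiv.swap_apply_of_ne_of_ne hxu hxv, Equiv.swap_apply_of_ne_of_ne hyu hyv]

/-- The unique non-neighbor of a degree `n-2` vertex, as a function. -/
noncomputable def nonNbr : V → V := fun u =>
  if h : ∃ w, w ≠ u ∧ ¬ G.Adj u w ∧ ∀ x, G.Adj u x ↔ (x ≠ u ∧ x ≠ w) then h.choose else u

lemma nonNbr_spec {u : V} (hu : G.degree u + 2 = Fintype.card V) :
    nonNbr G u ≠ u ∧ ¬ G.Adj u (nonNbr G u) ∧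
      ∀ x, G.Adj u x ↔ (x ≠ u ∧ x ≠ nonNbr G u) := by
  have h := exists_nonNbr G hu
  rw [nonNbr, dif_pos h]
  exact h.choose_spec

/-- The non-neighbor of a degree `n-2` vertex does not itself have degree `n-2`. -/
lemma nonNbr_not_D (h : G.LinkIrregular) {u : V} (hu : G.degree u + 2 = Fintype.card V)
    (hw : G.degree (nonNbr G u) + 2 = Fintype.card V) : False := by
  obtain ⟨hwu, hwn, cu⟩ := nonNbr_spec G hu
  obtain ⟨hw1, hw2, cw⟩ := nonNbr_spec G hw
  have huw : u = nonNbr G (nonNbr G u) := by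
    have h1 : ¬ G.Adj (nonNbr G u) u := fun hadj => hwn hadj.symm
    rw [cw] at h1
    push_neg at h1
    exact h1 (Ne.symm hwu)
  refine h u (nonNbr G u) (Ne.symm hwu) ⟨linkIsoAux G u (nonNbr G u) (Equiv.refl V) ?_
    (fun _ _ _ _ => Iff.rfl)⟩
  intro x
  rw [Equiv.refl_apply, cu, cw, ← huw]
  tauto

/-- `nonNbr` is injective on degree `n-2` vertices. -/
lemma nonNbr_injOn (h : G.LinkIrregular) {u v : V}
    (hu : G.degree u + 2 = Fintype.card V) (hv : G.degree v + 2 = Fintype.card V)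
    (heq : nonNbr G u = nonNbr G v) (hne : u ≠ v) : False := by
  obtain ⟨hwu, hwnu, cu⟩ := nonNbr_spec G hu
  obtain ⟨hwv, hwnv, cv⟩ := nonNbr_spec G hv
  rw [← heq] at hwv hwnv cv
  have hvw : v ≠ nonNbr G u := Ne.symm hwv
  have huw : u ≠ nonNbr G u := Ne.symm hwu
  refine h u v hne ⟨linkIsoAux G u v (Equiv.swap u v) ?_ ?_⟩
  · intro x
    by_cases hxu : x = u
    · rw [hxu, Equiv.swap_apply_left, cu, cv]
      simp
    · by_cases hxv : x = v
      · rw [hxv, Equiv.swap_apply_right, cu, cv]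
        exact ⟨fun _ => ⟨hne, huw⟩, fun _ => ⟨Ne.symm hne, hvw⟩⟩
      · rw [Equiv.swap_apply_of_ne_of_ne hxu hxv, cu, cv]
        tauto
  · intro x y hx hy
    obtain ⟨hxu, hxw⟩ := (cu x).1 hx
    obtain ⟨hyu, hyw⟩ := (cu y).1 hy
    by_cases hxv : x = v
    · by_cases hyv : y = v
      · rw [hxv, hyv, Equiv.swap_apply_right]
        simp
      · rw [hxv, Equiv.swap_apply_right, Equiv.swap_apply_of_ne_of_ne hyu hyv]
        exact ⟨fun _ => hy, fun _ => (cv y).2 ⟨hyv, hyw⟩⟩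
    · by_cases hyv : y = v
      · rw [hyv, Equiv.swap_apply_right, Equiv.swap_apply_of_ne_of_ne hxu hxv]
        exact ⟨fun _ => hx.symm, fun _ => ((cv x).2 ⟨hxv, hxw⟩).symm⟩
      · rw [Equiv.swap_apply_of_ne_of_ne hxu hxv, Equiv.swap_apply_of_ne_of_ne hyu hyv]

/-- At most `n/2` vertices of degree `n-2`. -/
lemma card_D_le (h : G.LinkIrregular) :
    2 * (univ.filter fun v => G.degree v + 2 = Fintype.card V).card ≤ Fintype.card V := by
  set D := univ.filter fun v => G.degree v + 2 = Fintype.card V with hD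
  have hmemD : ∀ v, v ∈ D ↔ G.degree v + 2 = Fintype.card V := by
    intro v; rw [hD, Finset.mem_filter]; simp
  have hinj : Set.InjOn (nonNbr G) D := by
    intro u hu v hv heq
    by_contra hne
    exact nonNbr_injOn G h ((hmemD u).1 hu) ((hmemD v).1 hv) heq hne
  have himg : D.image (nonNbr G) ⊆ univ \ D := by
    intro w hw
    obtain ⟨u, hu, rfl⟩ := Finset.mem_image.1 hw
    rw [Finset.mem_sdiff]
    refine ⟨mem_univ _, fun hcon => ?_⟩
    exact nonNbr_not_D G h ((hmemD u).1 hu) ((hmemD _).1 hcon)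
  have h1 : (D.image (nonNbr G)).card = D.card := Finset.card_image_of_injOn hinj
  have h2 : (D.image (nonNbr G)).card ≤ (univ \ D).card := Finset.card_le_card himg
  have h3 : (univ \ D).card = Fintype.card V - D.card := by
    rw [Finset.card_sdiff_of_subset (Finset.subset_univ D), Finset.card_univ]
  have h4 : D.card ≤ Fintype.card V := Finset.card_le_card (Finset.subset_univ D)
  omega

end Aux

/-- A link-irregular graph on `n` vertices has at most `(2n² - 5n + 4) / 4`
edges, i.e. `4·e(G) + 5n ≤ 2n² + 4`. -/
theorem linkIrregular_edge_upper_bound {V : Type*} [Fintype V] [DecidableEq V]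
    (G : SimpleGraph V) [DecidableRel G.Adj] (h : G.LinkIrregular) :
    4 * G.edgeFinset.card + 5 * Fintype.card V ≤ 2 * Fintype.card V ^ 2 + 4 := by
  set A := univ.filter fun v => G.degree v + 1 = Fintype.card V with hA
  set D := univ.filter fun v => G.degree v + 2 = Fintype.card V with hD
  have hAcard : A.card ≤ 1 := card_A_le G h
  have hDcard : 2 * D.card ≤ Fintype.card V := card_D_le G h
  have key : ∑ v : V, (2 * G.degree v + 6) ≤
      ∑ v : V, (2 * Fintype.card V +
        ((if v ∈ A then 4 else 0) + (if v ∈ D then 2 else 0))) := by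
    apply Finset.sum_le_sum
    intro v _
    have h1 : G.degree v < Fintype.card V := G.degree_lt_card_verts v
    rw [hA, hD]
    simp only [Finset.mem_filter, mem_univ, true_and]
    split_ifs <;> omega
  have hsum1 : ∑ v : V, (2 * G.degree v + 6) = 4 * G.edgeFinset.card + 6 * Fintype.card V := by
    rw [Finset.sum_add_distrib, ← Finset.mul_sum, G.sum_degrees_eq_twice_card_edges,
      Finset.sum_const, Finset.card_univ, smul_eq_mul]
    ring
  have hsum2 : ∑ v : V, (2 * Fintype.card V +
        ((if v ∈ A then 4 else 0) + (if v ∈ D then 2 else 0)))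
      = 2 * (Fintype.card V * Fintype.card V) + (4 * A.card + 2 * D.card) := by
    rw [Finset.sum_add_distrib, Finset.sum_add_distrib, Finset.sum_const, Finset.card_univ,
      Finset.sum_ite_mem, Finset.sum_ite_mem, Finset.univ_inter, Finset.univ_inter,
      Finset.sum_const, Finset.sum_const, smul_eq_mul, smul_eq_mul, smul_eq_mul]
    ring
  rw [hsum1, hsum2] at key
  have hsq : Fintype.card V ^ 2 = Fintype.card V * Fintype.card V := sq (Fintype.card V)
  omega
end

section
/- The minimum number of edges f(n) of a link-irregular graph on n vertices satisfies f(n) = Ω(n·√(log n)); that is, there exist constants c > 0 and N such that every link-irregular graph on n ≥ N vertices has at least c·n·√(log n) edges. -/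
open SimpleGraph Finset

/-!
Links of vertices of degree `d` are graphs on `d` vertices, so a link-irregular graph has at
most `2 ^ (d * d)` vertices of degree `d`, hence at most `∑_{d < D} 2 ^ (d * d) ≤ 2 ^ (D * D)`
vertices of degree below `D`. Taking `D ≈ √(log₂ n)` with `2 * 2 ^ (D * D) ≤ n`, at least
half of the vertices have degree at least `D`, and the degree-sum formula gives
`e(G) ≥ n * D / 4 = Ω(n √(log n))`.
-/

lemma Fintype.card_simpleGraph_fin_le (d : ℕ) :
    Fintype.card (SimpleGraph (Fin d)) ≤ 2 ^ (d * d) := by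
  calc Fintype.card (SimpleGraph (Fin d)) ≤ Fintype.card (Fin d → Fin d → Prop) :=
        Fintype.card_le_of_injective _ SimpleGraph.adj_injective
    _ = 2 ^ (d * d) := by simp [pow_mul]

lemma Nat.sum_range_two_pow_mul_self_le (D : ℕ) : ∑ d ∈ range D, 2 ^ (d * d) ≤ 2 ^ (D * D) := by
  induction D with
  | zero => simp
  | succ D ih =>
    rw [sum_range_succ]
    calc ∑ d ∈ range D, 2 ^ (d * d) + 2 ^ (D * D) ≤ 2 ^ (D * D + 1) := by omega
      _ ≤ 2 ^ ((D + 1) * (D + 1)) := Nat.pow_le_pow_right two_pos (by nlinarith)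

namespace SimpleGraph

variable {V : Type*} [Fintype V] {G : SimpleGraph V} [DecidableRel G.Adj]

lemma LinkIrregular.card_filter_degree_eq_le (hG : G.LinkIrregular) (d : ℕ) :
    #{v | G.degree v = d} ≤ 2 ^ (d * d) := by
  let e (v : {v // G.degree v = d}) : G.neighborSet v ≃ Fin d :=
    Fintype.equivFinOfCardEq ((G.card_neighborSet_eq_degree v).trans v.2)
  have hinj : Function.Injective fun v : {v // G.degree v = d} =>
      (G.link v).map (e v).toEmbedding := by
    intro u v huv
    by_contra hne
    apply hG u v (Subtype.coe_ne_coe.mpr hne)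
    simp only at huv
    exact ⟨(Iso.map (e u) _).trans (huv ▸ (Iso.map (e v) _).symm)⟩
  rw [← Fintype.card_subtype]
  exact (Fintype.card_le_of_injective _ hinj).trans (Fintype.card_simpleGraph_fin_le d)

lemma LinkIrregular.card_filter_degree_lt_le (hG : G.LinkIrregular) (D : ℕ) :
    #{v | G.degree v < D} ≤ 2 ^ (D * D) := by
  calc #{v | G.degree v < D}
      = ∑ d ∈ range D, #{v | G.degree v < D ∧ G.degree v = d} := by
        rw [card_eq_sum_card_fiberwise (f := fun v => G.degree v) (t := range D)
          fun v hv => by simpa using hv]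
        simp only [filter_filter]
    _ ≤ ∑ d ∈ range D, 2 ^ (d * d) := by
        gcongr with d
        exact (card_le_card (monotone_filter_right _ fun _ _ => And.right)).trans
          (hG.card_filter_degree_eq_le d)
    _ ≤ 2 ^ (D * D) := Nat.sum_range_two_pow_mul_self_le D

lemma card_filter_le_degree_mul_le (D : ℕ) :
    #{v | D ≤ G.degree v} * D ≤ 2 * #G.edgeFinset := by
  rw [← sum_degrees_eq_twice_card_edges, ← smul_eq_mul, ← sum_const]
  calc ∑ _ ∈ {v | D ≤ G.degree v}, D ≤ ∑ v ∈ {v | D ≤ G.degree v}, G.degree v :=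
        sum_le_sum fun v hv => (mem_filter.mp hv).2
    _ ≤ ∑ v, G.degree v := sum_le_sum_of_subset (subset_univ _)

lemma LinkIrregular.card_mul_le_four_mul_card_edgeFinset (hG : G.LinkIrregular) {D : ℕ}
    (hD : 2 * 2 ^ (D * D) ≤ Fintype.card V) :
    Fintype.card V * D ≤ 4 * #G.edgeFinset := by
  have hsplit := card_filter_add_card_filter_not (s := univ) fun v => G.degree v < D
  simp only [not_lt, card_univ] at hsplit
  have hhalf : Fintype.card V ≤ 2 * #{v | D ≤ G.degree v} := by
    have := hG.card_filter_degree_lt_le D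
    omega
  calc Fintype.card V * D ≤ 2 * (#{v | D ≤ G.degree v} * D) := by
        rw [← mul_assoc]; exact Nat.mul_le_mul_right D hhalf
    _ ≤ 4 * #G.edgeFinset := by
        have := card_filter_le_degree_mul_le (G := G) D
        omega

end SimpleGraph

lemma Real.log_natCast_le_natLog_add_one (n : ℕ) : Real.log n ≤ Nat.log 2 n + 1 := by
  rcases n.eq_zero_or_pos with rfl | hn
  · simp
  have hlt : (n : ℝ) < 2 ^ (Nat.log 2 n + 1) := by
    exact_mod_cast Nat.lt_pow_succ_log_self one_lt_two n
  calc Real.log n ≤ Real.log (2 ^ (Nat.log 2 n + 1)) := Real.log_le_log (by positivity) hlt.le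
    _ = (Nat.log 2 n + 1) * Real.log 2 := by rw [Real.log_pow]; push_cast; ring
    _ ≤ Nat.log 2 n + 1 := by
        have := Real.log_two_lt_d9
        nlinarith

lemma Nat.two_mul_two_pow_sqrt_log_sub_one_le {n : ℕ} (hn : 2 ≤ n) :
    2 * 2 ^ ((Nat.log 2 n - 1).sqrt * (Nat.log 2 n - 1).sqrt) ≤ n := by
  have hL : 1 ≤ Nat.log 2 n := Nat.le_log_of_pow_le one_lt_two (by simpa using hn)
  calc 2 * 2 ^ ((Nat.log 2 n - 1).sqrt * (Nat.log 2 n - 1).sqrt)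
      ≤ 2 * 2 ^ (Nat.log 2 n - 1) := by gcongr; exacts [one_le_two, Nat.sqrt_le _]
    _ = 2 ^ Nat.log 2 n := by rw [← pow_succ']; congr 1; omega
    _ ≤ n := Nat.pow_log_le_self 2 (by omega)

lemma Real.sqrt_log_le_three_mul_sqrt_natLog_sub_one {n : ℕ} (hn : 4 ≤ n) :
    √(Real.log n) ≤ 3 * (Nat.log 2 n - 1).sqrt := by
  set L := Nat.log 2 n
  set D := (L - 1).sqrt
  have hL : 2 ≤ L := Nat.le_log_of_pow_le one_lt_two (by simpa using hn)
  have hD : 1 ≤ D := Nat.le_sqrt.mpr (by omega)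
  have hLD : L ≤ (D + 1) * (D + 1) := by
    have : L - 1 < (D + 1) * (D + 1) := Nat.lt_succ_sqrt _
    omega
  rw [Real.sqrt_le_left (by positivity)]
  calc Real.log n ≤ L + 1 := Real.log_natCast_le_natLog_add_one n
    _ ≤ (3 * D : ℝ) ^ 2 := by exact_mod_cast (show L + 1 ≤ (3 * D) ^ 2 by nlinarith)

/-- The minimum number of edges of a link-irregular graph on `n` vertices is
`Ω(n·√(log n))`. -/
theorem linkIrregular_edges_omega :
    ∃ c : ℝ, 0 < c ∧ ∃ N : ℕ, ∀ n : ℕ, N ≤ n →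
      ∀ (G : SimpleGraph (Fin n)) (_ : DecidableRel G.Adj), G.LinkIrregular →
        c * n * Real.sqrt (Real.log n) ≤ (G.edgeFinset.card : ℝ) := by
  refine ⟨1 / 12, by norm_num, 4, fun n hn G _ hG => ?_⟩
  set D := (Nat.log 2 n - 1).sqrt
  have hedges : n * D ≤ 4 * #G.edgeFinset := by
    simpa using hG.card_mul_le_four_mul_card_edgeFinset
      (by simpa using Nat.two_mul_two_pow_sqrt_log_sub_one_le (by omega : 2 ≤ n))
  calc 1 / 12 * n * √(Real.log n) ≤ 1 / 12 * n * (3 * D) := by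
        gcongr; exact Real.sqrt_log_le_three_mul_sqrt_natLog_sub_one hn
    _ = (n * D : ℕ) / 4 := by push_cast; ring
    _ ≤ #G.edgeFinset := by
        rw [div_le_iff₀ (by norm_num)]; exact_mod_cast hedges.trans_eq (mul_comm _ _)
end

section
/- All but finitely many link-irregular graphs are non-planar; i.e., there are only finitely many isomorphism classes of planar link-irregular graphs. -/
open SimpleGraph Finset

/-- `H` is a minor of `G`: there are disjoint nonempty connected branch sets in `G`,
one for each vertex of `H`, with an edge of `G` between the branch sets of any two
adjacent vertices of `H`. -/
def SimpleGraph.HasMinor {V W : Type*} (G : SimpleGraph V) (H : SimpleGraph W) : Prop :=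
  ∃ f : W → Set V,
    (∀ w, (f w).Nonempty) ∧
    (∀ w, (G.induce (f w)).Connected) ∧
    (Pairwise fun w₁ w₂ => Disjoint (f w₁) (f w₂)) ∧
    (∀ w₁ w₂, H.Adj w₁ w₂ → ∃ a ∈ f w₁, ∃ b ∈ f w₂, G.Adj a b)

/-- Planarity, via Wagner's characterization: a graph is planar iff it has neither
a `K₅` minor nor a `K₃,₃` minor. -/
def SimpleGraph.Planar {V : Type*} (G : SimpleGraph V) : Prop :=
  ¬ G.HasMinor (completeGraph (Fin 5)) ∧
  ¬ G.HasMinor (completeBipartiteGraph (Fin 3) (Fin 3))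

/-!
Mader's argument: a graph on `n ≥ 1` vertices with at least `2^r n` edges has a `K_{r+2}` minor.
If some edge lies in fewer than `2^(r+1)` triangles, contracting it loses at most `2^(r+1)`
edges and one vertex, and we induct on `n`; otherwise every link of a vertex `x` has minimum
degree at least `2^(r+1)`, hence at least `2^r deg x` edges, so by induction on `r` it has a
`K_{r+1}` minor, to which `x` is an apex. With `r = 3`, a planar graph has fewer than `8n`
edges, so fewer than `n / 2` of its vertices have degree at least `32`. In a link-irregular
graph the links of the remaining vertices are pairwise non-isomorphic graphs on fewer than `32`
vertices, so there are boundedly many of them.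
-/

namespace SimpleGraph

variable {V W : Type*} {G : SimpleGraph V}

section Minor

lemma induce_singleton_connected (v : V) : (G.induce {v}).Connected :=
  Connected.of_subsingleton

lemma induce_biUnion_connected {V' : Type*} {G' : SimpleGraph V'} {S : Set V'}
    {T : V' → Set V} (hS : (G'.induce S).Connected)
    (hT : ∀ v ∈ S, (G.induce (T v)).Connected)
    (hadj : ∀ a ∈ S, ∀ b ∈ S, G'.Adj a b → ∃ u ∈ T a, ∃ w ∈ T b, G.Adj u w) :
    (G.induce (⋃ v ∈ S, T v)).Connected := by
  have key : ∀ a b : S, (G'.induce S).Reachable a b →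
      ∃ s ⊆ ⋃ v ∈ S, T v, T a ⊆ s ∧ T b ⊆ s ∧ (G.induce s).Connected := by
    rintro a b ⟨p⟩
    induction p with
    | @nil a =>
      exact ⟨T a, Set.subset_biUnion_of_mem (u := T) a.2, le_rfl, le_rfl, hT _ a.2⟩
    | @cons a c b hac p ih =>
      obtain ⟨s, hsU, hcs, hbs, hs⟩ := ih
      obtain ⟨u, hu, w, hw, huw⟩ := hadj _ a.2 _ c.2 hac
      exact ⟨T a ∪ s, Set.union_subset (Set.subset_biUnion_of_mem (u := T) a.2) hsU,
        Set.subset_union_left, hbs.trans Set.subset_union_right,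
        connected_induce_union (hT _ a.2).preconnected hs.preconnected hu (hcs hw) huw⟩
  obtain ⟨a⟩ := hS.nonempty
  obtain ⟨⟨u, hu⟩⟩ := (hT _ a.2).nonempty
  refine induce_connected_of_patches u (Set.mem_biUnion a.2 hu) fun {v} hv => ?_
  obtain ⟨b, hb, hvb⟩ := Set.mem_iUnion₂.mp hv
  obtain ⟨s, hsU, has, hbs, hs⟩ := key a ⟨b, hb⟩ (hS.preconnected _ _)
  exact ⟨s, hsU, has hu, hbs hvb, hs.preconnected _ _⟩

theorem HasMinor.trans {V' : Type*} {G' : SimpleGraph V'} {H : SimpleGraph W}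
    (h₁ : G.HasMinor G') (h₂ : G'.HasMinor H) : G.HasMinor H := by
  obtain ⟨g, -, hg_conn, hg_disj, hg_adj⟩ := h₁
  obtain ⟨f, hf_ne, hf_conn, hf_disj, hf_adj⟩ := h₂
  refine ⟨fun w => ⋃ v ∈ f w, g v, fun w => ?_,
    fun w => induce_biUnion_connected (hf_conn w) (fun v _ => hg_conn v)
      (fun a _ b _ => hg_adj a b), fun w₁ w₂ hw => ?_, fun w₁ w₂ hw => ?_⟩
  · obtain ⟨v, hv⟩ := hf_ne w
    obtain ⟨⟨u, hu⟩⟩ := (hg_conn v).nonempty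
    exact ⟨u, Set.mem_biUnion hv hu⟩
  · simp only [Set.disjoint_iUnion₂_left, Set.disjoint_iUnion₂_right]
    exact fun v₂ hv₂ v₁ hv₁ => hg_disj ((hf_disj hw).ne_of_mem hv₁ hv₂)
  · obtain ⟨a, ha, b, hb, hab⟩ := hf_adj w₁ w₂ hw
    obtain ⟨u, hu, v, hv, huv⟩ := hg_adj a b hab
    exact ⟨u, Set.mem_biUnion ha hu, v, Set.mem_biUnion hb hv, huv⟩

theorem hasMinor_map {f : V → W} (hf : ∀ w, (G.induce (f ⁻¹' {w})).Connected) :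
    G.HasMinor (G.map f) := by
  refine ⟨fun w => f ⁻¹' {w}, fun w => Set.nonempty_coe_sort.mp (hf w).nonempty, hf,
    fun w₁ w₂ hw => Disjoint.preimage f (Set.disjoint_singleton.mpr hw), ?_⟩
  rintro _ _ ⟨-, u, v, huv, rfl, rfl⟩
  exact ⟨u, rfl, v, rfl, huv⟩

lemma induce_image_val_connected {s : Set V} {t : Set s}
    (h : ((G.induce s).induce t).Connected) : (G.induce (Subtype.val '' t)).Connected :=
  h.map ⟨fun p => ⟨p.1.1, p.1, p.2, rfl⟩, id⟩
    (by rintro ⟨_, p, hp, rfl⟩; exact ⟨⟨p, hp⟩, rfl⟩)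

theorem hasMinor_completeGraph_one [Nonempty V] : G.HasMinor (completeGraph (Fin 1)) := by
  obtain ⟨v⟩ := ‹Nonempty V›
  exact ⟨fun _ => {v}, fun _ => Set.singleton_nonempty v, fun _ => induce_singleton_connected v,
    fun i j h => absurd (Subsingleton.elim i j) h,
    fun i j h => absurd (Subsingleton.elim i j) h.ne⟩

theorem hasMinor_completeGraph_succ_of_induce_neighborSet (x : V) {r : ℕ}
    (h : (G.induce (G.neighborSet x)).HasMinor (completeGraph (Fin r))) :
    G.HasMinor (completeGraph (Fin (r + 1))) := by
  obtain ⟨f, hf_ne, hf_conn, hf_disj, hf_adj⟩ := h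
  set F : Fin (r + 1) → Set V := Fin.cons {x} fun j => Subtype.val '' f j
  have hx : ∀ j : Fin r, x ∉ F j.succ := by
    rintro j ⟨p, -, hp⟩
    exact (p.2 : G.Adj x p).ne hp.symm
  have hx_adj : ∀ j : Fin r, ∃ b ∈ F j.succ, G.Adj x b := fun j =>
    let ⟨p, hp⟩ := hf_ne j
    ⟨p, ⟨p, hp, rfl⟩, p.2⟩
  refine ⟨F, Fin.cases ⟨x, rfl⟩ fun j => (hf_ne j).image _,
    Fin.cases (induce_singleton_connected x) fun j => induce_image_val_connected (hf_conn j),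
    fun i j hij => ?_, fun i j hij => ?_⟩ <;>
  rcases Fin.eq_zero_or_eq_succ i with rfl | ⟨i, rfl⟩ <;>
  rcases Fin.eq_zero_or_eq_succ j with rfl | ⟨j, rfl⟩
  · exact absurd rfl hij
  · exact Set.disjoint_singleton_left.mpr (hx j)
  · exact Set.disjoint_singleton_right.mpr (hx i)
  · exact Set.disjoint_image_of_injective Subtype.val_injective
      (hf_disj (ne_of_apply_ne Fin.succ hij))
  · exact absurd rfl hij
  · obtain ⟨b, hb, hxb⟩ := hx_adj j
    exact ⟨x, rfl, b, hb, hxb⟩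
  · obtain ⟨b, hb, hxb⟩ := hx_adj i
    exact ⟨b, hb, x, rfl, hxb.symm⟩
  · obtain ⟨a, ha, b, hb, hab⟩ := hf_adj i j (ne_of_apply_ne Fin.succ hij)
    exact ⟨a, ⟨a, ha, rfl⟩, b, ⟨b, hb, rfl⟩, hab⟩

end Minor

section Contraction

variable [DecidableEq V] {x y : V}

def collapse (hxy : x ≠ y) (v : V) : {v : V // v ≠ y} :=
  if h : v = y then ⟨x, hxy⟩ else ⟨v, h⟩

def contractEdge (G : SimpleGraph V) (h : G.Adj x y) : SimpleGraph {v : V // v ≠ y} :=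
  G.map (collapse h.ne)

lemma coe_collapse (hxy : x ≠ y) (v : V) : (collapse hxy v : V) = if v = y then x else v := by
  unfold collapse; split_ifs <;> rfl

lemma preimage_collapse (hxy : x ≠ y) (w : {v : V // v ≠ y}) :
    collapse hxy ⁻¹' {w} = if w.1 = x then {x, y} else {w.1} := by
  ext v
  rcases w with ⟨w, hw⟩
  by_cases hv : v = y <;> split_ifs with hwx <;> simp [collapse, hv, Subtype.ext_iff] <;> grind

theorem hasMinor_contractEdge (h : G.Adj x y) : G.HasMinor (G.contractEdge h) :=
  hasMinor_map fun w => by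
    by_cases hw : w.1 = x
    · rw [preimage_collapse, if_pos hw]
      exact induce_pair_connected_of_adj h
    · rw [preimage_collapse, if_neg hw]
      exact induce_singleton_connected _

theorem card_edgeFinset_le_card_edgeFinset_contractEdge [Fintype V] [DecidableRel G.Adj]
    (h : G.Adj x y) [Fintype (G.contractEdge h).edgeSet] :
    #G.edgeFinset ≤
      #(G.contractEdge h).edgeFinset + #(G.neighborFinset x ∩ G.neighborFinset y) + 1 := by
  set Y := (G.neighborFinset x ∩ G.neighborFinset y).image (s(y, ·))
  set E₀ := G.edgeFinset \ insert s(x, y) Y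
  have hE : #G.edgeFinset ≤ #E₀ + #Y + 1 := calc
    #G.edgeFinset ≤ #(E₀ ∪ insert s(x, y) Y) :=
      card_le_card (by rw [sdiff_union_self_eq_union]; exact subset_union_left)
    _ ≤ #E₀ + #(insert s(x, y) Y) := card_union_le _ _
    _ ≤ #E₀ + #Y + 1 := by grw [card_insert_le]; omega
  have hE₀ : #E₀ ≤ #(G.contractEdge h).edgeFinset := by
    refine card_le_card_of_injOn (Sym2.map (collapse h.ne)) ?_ ?_
    · intro e he
      induction e using Sym2.ind with | _ u v
      simp only [E₀, Y, coe_sdiff, Set.mem_sdiff, mem_coe, mem_edgeFinset, mem_edgeSet,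
        coe_insert, Set.mem_insert_iff, coe_image, Set.mem_image] at he
      simp only [mem_coe, mem_edgeFinset, Sym2.map_mk, mem_edgeSet]
      refine map_adj_apply' he.1 fun huv => he.2 (Or.inl ?_)
      simp only [Subtype.ext_iff, coe_collapse] at huv
      split_ifs at huv <;> grind [he.1.ne]
    -- `collapse` only identifies `y` with `x`, so distinct edges of `E₀` could only collide
    -- as `s(x, c)` and `s(y, c)` for a common neighbour `c`, and those `s(y, c)` form `Y`.
    · intro e he e' he' hee
      induction e using Sym2.ind with | _ u v
      induction e' using Sym2.ind with | _ u' v'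
      simp only [E₀, Y, coe_sdiff, Set.mem_sdiff, mem_coe, mem_edgeFinset, mem_edgeSet,
        coe_insert, Set.mem_insert_iff, coe_image, Set.mem_image, mem_inter,
        mem_neighborFinset] at he he'
      simp only [Sym2.map_mk, Sym2.eq_iff, Subtype.ext_iff, coe_collapse] at hee ⊢
      split_ifs at hee <;> grind [he.1.ne, he'.1.ne, Adj.symm]
  have hY : #Y ≤ #(G.neighborFinset x ∩ G.neighborFinset y) := card_image_le
  omega

end Contraction

section Mader

variable [Fintype V] [DecidableRel G.Adj]

theorem mul_degree_le_card_edgeFinset_induce_neighborSet [DecidableEq V] (x : V) {k : ℕ}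
    (h : ∀ b, G.Adj x b → 2 * k ≤ #(G.neighborFinset x ∩ G.neighborFinset b)) :
    k * G.degree x ≤ #(G.induce (G.neighborSet x)).edgeFinset := by
  have hdeg : ∀ b : G.neighborSet x, 2 * k ≤ (G.induce (G.neighborSet x)).degree b := by
    intro b
    rw [← card_neighborFinset_eq_degree, ← card_map (.subtype _), map_neighborFinset_induce,
      inter_comm]
    convert h b b.2
    ext; simp
  have hsum := Finset.card_nsmul_le_sum univ _ (2 * k) fun b _ => hdeg b
  rw [sum_degrees_eq_twice_card_edges, card_univ, card_neighborSet_eq_degree, smul_eq_mul]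
    at hsum
  linarith

lemma exists_adj_of_two_pow_mul_card_le {r : ℕ} [Nonempty V]
    (hG : 2 ^ r * Fintype.card V ≤ #G.edgeFinset) : ∃ x y, G.Adj x y :=
  ne_bot_iff_exists_adj.mp <| edgeFinset_nonempty.mp <| card_pos.mp <|
    hG.trans_lt' (Nat.mul_pos (by positivity) Fintype.card_pos)

theorem hasMinor_completeGraph_of_two_pow_mul_card_le (r : ℕ) [Nonempty V]
    (hG : 2 ^ r * Fintype.card V ≤ #G.edgeFinset) :
    G.HasMinor (completeGraph (Fin (r + 2))) := by
  induction r generalizing V with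
  | zero =>
    obtain ⟨x, y, hxy⟩ := exists_adj_of_two_pow_mul_card_le hG
    have : Nonempty (G.neighborSet x) := ⟨⟨y, hxy⟩⟩
    exact hasMinor_completeGraph_succ_of_induce_neighborSet x hasMinor_completeGraph_one
  | succ r ih =>
    induction hn : Fintype.card V using Nat.strong_induction_on generalizing V with
    | _ n ihn =>
    classical
    by_cases hsparse :
        ∃ x y, G.Adj x y ∧ #(G.neighborFinset x ∩ G.neighborFinset y) < 2 ^ (r + 1)
    · obtain ⟨x, y, hxy, hcommon⟩ := hsparse
      have : Nonempty {v // v ≠ y} := ⟨⟨x, hxy.ne⟩⟩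
      have hcard : Fintype.card {v // v ≠ y} = n - 1 := by
        rw [Fintype.card_subtype_compl, Fintype.card_subtype_eq, hn]
      have hedges := card_edgeFinset_le_card_edgeFinset_contractEdge hxy
      have := Fintype.card_pos (α := V)
      refine (hasMinor_contractEdge hxy).trans <|
        ihn (n - 1) (by omega) (G := G.contractEdge hxy) ?_ hcard
      rw [hcard, Nat.mul_sub_one, ← hn]
      omega
    · push Not at hsparse
      obtain ⟨x, y, hxy⟩ := exists_adj_of_two_pow_mul_card_le hG
      have : Nonempty (G.neighborSet x) := ⟨⟨y, hxy⟩⟩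
      refine hasMinor_completeGraph_succ_of_induce_neighborSet x (ih (G := G.induce _) ?_)
      rw [card_neighborSet_eq_degree]
      exact mul_degree_le_card_edgeFinset_induce_neighborSet x fun b hb => by
        rw [← pow_succ']; exact hsparse x b hb

end Mader

theorem Planar.card_edgeFinset_lt [Fintype V] [DecidableRel G.Adj] [Nonempty V]
    (h : G.Planar) : #G.edgeFinset < 8 * Fintype.card V := by
  by_contra! hle
  exact h.1 (hasMinor_completeGraph_of_two_pow_mul_card_le 3 hle)

section Counting

lemma nonempty_iso_of_heq {m n : ℕ} (h : m = n) {A : SimpleGraph (Fin m)}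
    {B : SimpleGraph (Fin n)} (hAB : HEq A B) : Nonempty (A ≃g B) := by
  subst h
  cases hAB
  exact ⟨.refl⟩

theorem card_le_card_sigma_of_pairwise_not_iso {ι : Type*} {α : ι → Type*}
    [∀ i, Fintype (α i)] (H : ∀ i, SimpleGraph (α i)) {s : Finset ι} {d : ℕ}
    (hcard : ∀ i ∈ s, Fintype.card (α i) < d)
    (hH : ∀ i ∈ s, ∀ j ∈ s, Nonempty (H i ≃g H j) → i = j) :
    #s ≤ Fintype.card (Σ k : Fin d, SimpleGraph (Fin k)) := by
  let code : s → Σ k : Fin d, SimpleGraph (Fin k) := fun i =>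
    ⟨⟨_, hcard i i.2⟩, (H i).overFin rfl⟩
  rw [← Fintype.card_coe s]
  refine Fintype.card_le_of_injective code fun i j hij => Subtype.ext (hH i i.2 j j.2 ?_)
  obtain ⟨hk, hG⟩ := Sigma.mk.inj_iff.mp hij
  obtain ⟨e⟩ := nonempty_iso_of_heq (congrArg Fin.val hk) hG
  exact ⟨(overFinIso _ rfl).trans (e.trans (overFinIso _ rfl).symm)⟩

variable [Fintype V] [DecidableRel G.Adj]

theorem mul_card_filter_le_degree_le (d : ℕ) :
    d * #{v | d ≤ G.degree v} ≤ 2 * #G.edgeFinset := by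
  rw [← sum_degrees_eq_twice_card_edges, mul_comm, ← smul_eq_mul]
  exact (card_nsmul_le_sum _ _ d fun v hv => (mem_filter.mp hv).2).trans
    (sum_le_sum_of_subset (filter_subset _ _))

theorem LinkIrregular.card_filter_degree_lt_le_s14 (hG : G.LinkIrregular) (d : ℕ) :
    #{v | G.degree v < d} ≤ Fintype.card (Σ k : Fin d, SimpleGraph (Fin k)) :=
  card_le_card_sigma_of_pairwise_not_iso G.link
    (fun v hv => card_neighborSet_eq_degree G v ▸ (mem_filter.mp hv).2)
    fun u _ v _ huv => by_contra fun hne => hG u v hne huv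

end Counting

end SimpleGraph

/-- All but finitely many link-irregular graphs are non-planar: there is a bound
`N` such that every planar link-irregular graph has at most `N` vertices (and
hence there are only finitely many isomorphism classes of such graphs). -/
theorem finitely_many_planar_linkIrregular :
    ∃ N : ℕ, ∀ (n : ℕ) (G : SimpleGraph (Fin n)),
      G.Planar → G.LinkIrregular → n ≤ N := by
  classical
  refine ⟨2 * Fintype.card (Σ k : Fin 32, SimpleGraph (Fin k)), fun n G hplanar hirr => ?_⟩
  rcases Nat.eq_zero_or_pos n with rfl | hn
  · exact Nat.zero_le _
  have : Nonempty (Fin n) := ⟨⟨0, hn⟩⟩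
  have hedges := hplanar.card_edgeFinset_lt
  have hhigh := G.mul_card_filter_le_degree_le 32
  have hlow := hirr.card_filter_degree_lt_le_s14 32
  have hsplit := card_filter_add_card_filter_not (s := univ) fun v => G.degree v < 32
  simp only [not_lt, card_univ, Fintype.card_fin] at hsplit hedges
  omega
end

section
/- There exists no r-regular link-irregular graph on n vertices with n ≤ 9. -/
open SimpleGraph Finset

/-!
If `n ≤ r + 3`, the complement of `G` is regular of degree at most two, so it has a nontrivial
automorphism (a transposition of two twins, or a rotation along a cycle); this is also an
automorphism of `G`, and it carries some link onto the isomorphic link of another vertex.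

Otherwise `r ≤ 5`, and `r = 5` would force `n = 9` with `n * r` odd. For `r ≤ 4`, no link has a
universal vertex, because such a vertex `x` of the link of `u` is a twin of `u`. Up to
isomorphism there are at most `r + 3 < n` graphs on `r` vertices without a universal vertex
(found by enumeration), so two links are isomorphic by pigeonhole.
-/

theorem List.formPerm_apply_formPerm_ne {α : Type*} [DecidableEq α] {s : List α}
    (hs : s.Nodup) (hlen : 3 ≤ s.length) {x : α} (hx : x ∈ s) :
    s.formPerm (s.formPerm x) ≠ x := by
  obtain ⟨i, hi, rfl⟩ := List.getElem_of_mem hx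
  have h2 := List.formPerm_pow_apply_getElem s hs 2 i hi
  rw [pow_two, Equiv.Perm.mul_apply] at h2
  rw [h2, Ne, hs.getElem_inj_iff]
  rcases Nat.lt_or_ge (i + 2) s.length with h | h
  · rw [Nat.mod_eq_of_lt h]; omega
  · rw [Nat.mod_eq_sub_mod h, Nat.mod_eq_of_lt (by omega)]; omega

namespace SimpleGraph

variable {V W : Type*} {G : SimpleGraph V} {G' : SimpleGraph W}

def Iso.link (φ : G ≃g G') (v : V) : G.link v ≃g G'.link (φ v) :=
  φ.induce (φ.toEquiv.bijOn fun _ ↦ φ.map_adj_iff)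

def Iso.ofCompl (φ : Gᶜ ≃g G'ᶜ) : G ≃g G' :=
  { φ.toEquiv with map_rel_iff' := (Embedding.complEquiv.symm φ.toEmbedding).map_rel_iff' }

def swapIso [DecidableEq V] {u v : V} (h : ∀ w, w ≠ u → w ≠ v → (G.Adj u w ↔ G.Adj v w)) :
    G ≃g G where
  toEquiv := Equiv.swap u v
  map_rel_iff' {a b} := by
    simp only [Equiv.swap_apply_def]
    split_ifs <;> grind [G.adj_comm, G.irrefl]

theorem LinkIrregular.iso_apply_eq (hG : G.LinkIrregular) (φ : G ≃g G) (v : V) : φ v = v :=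
  of_not_not fun h ↦ hG _ _ (Ne.symm h) ⟨φ.link v⟩

theorem LinkIrregular.compl_iso_apply_eq (hG : G.LinkIrregular) (φ : Gᶜ ≃g Gᶜ) (v : V) :
    φ v = v :=
  hG.iso_apply_eq (Iso.ofCompl φ) v

theorem LinkIrregular.card_le_of_forall_iso [Fintype V] {ι : Type*} [Fintype ι]
    (hG : G.LinkIrregular) (H : ι → SimpleGraph W)
    (h : ∀ v, ∃ i, Nonempty (G.link v ≃g H i)) : Fintype.card V ≤ Fintype.card ι := by
  choose f hf using h
  refine Fintype.card_le_of_injective f fun u v huv ↦ of_not_not fun hne ↦ hG u v hne ?_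
  obtain ⟨φ⟩ := hf u
  obtain ⟨ψ⟩ := hf v
  exact ⟨φ.trans ((huv ▸ ψ).symm)⟩

theorem LinkIrregular.not_isUniversal_link [Fintype V] [DecidableRel G.Adj]
    (hG : G.LinkIrregular) {u : V} (x : G.neighborSet u) (hdeg : G.degree x ≤ G.degree u) :
    ¬ (G.link u).IsUniversal x := by
  classical
  intro hx
  have hux : G.Adj u x := x.2
  have hsub : (G.neighborFinset u).erase x ⊆ (G.neighborFinset x).erase u := by
    intro y hy
    obtain ⟨hyx, huy⟩ := Finset.mem_erase.mp hy
    rw [mem_neighborFinset] at huy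
    exact Finset.mem_erase.mpr ⟨huy.ne', (mem_neighborFinset _ _ _).mpr
      (@hx ⟨y, huy⟩ fun h ↦ hyx (congrArg Subtype.val h).symm)⟩
  have heq : (G.neighborFinset u).erase x = (G.neighborFinset x).erase u := by
    refine Finset.eq_of_subset_of_card_le hsub ?_
    rw [card_erase_of_mem ((mem_neighborFinset _ _ _).mpr hux),
      card_erase_of_mem ((mem_neighborFinset _ _ _).mpr hux.symm)]
    exact Nat.sub_le_sub_right hdeg 1
  have htwins : ∀ w, w ≠ u → w ≠ x → (G.Adj u w ↔ G.Adj x w) := fun w hwu hwx ↦ by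
    simpa [hwu, hwx] using congrArg (w ∈ ·) heq
  exact hux.ne' (by simpa [swapIso] using hG.iso_apply_eq (swapIso htwins) u)

section Rotation

variable [DecidableEq V]

theorem Walk.IsCycle.adj_formPerm {v : V} {c : G.Walk v v} (hc : c.IsCycle) {x : V}
    (hx : x ∈ c.support.tail) : G.Adj x (c.support.tail.formPerm x) := by
  obtain ⟨i, hi, rfl⟩ := List.getElem_of_mem hx
  have hlen : c.support.tail.length = c.length := by simp
  rw [List.formPerm_apply_getElem _ hc.support_nodup]
  simp only [List.getElem_tail, Walk.support_getElem_eq_getVert, hlen]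
  rcases Nat.lt_or_ge (i + 1) c.length with h | h
  · rw [Nat.mod_eq_of_lt h]
    exact c.adj_getVert_succ h
  · rw [show i + 1 = c.length by omega, Nat.mod_self, c.getVert_length]
    simpa using c.adj_getVert_succ (i := 0) (by omega)

theorem eq_or_eq_of_adj_of_degree_le_two [G.LocallyFinite] {x y z w : V} (hxy : G.Adj x y)
    (hxz : G.Adj x z) (hyz : y ≠ z) (hx : G.degree x ≤ 2) (hxw : G.Adj x w) : w = y ∨ w = z := by
  have hN : G.neighborFinset x = {y, z} := by
    refine (Finset.eq_of_subset_of_card_le ?_ ?_).symm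
    · simp [Finset.insert_subset_iff, hxy, hxz]
    · rwa [Finset.card_pair hyz]
  simpa [hN] using (G.mem_neighborFinset x w).mpr hxw

variable {s : List V}

theorem adj_formPerm_inv (hadj : ∀ x ∈ s, G.Adj x (s.formPerm x)) {x : V} (hx : x ∈ s) :
    G.Adj x (s.formPerm⁻¹ x) := by
  have hx' : s.formPerm⁻¹ x ∈ s := List.formPerm_mem_iff_mem.mp (by simpa using hx)
  simpa using (hadj _ hx').symm

theorem adj_formPerm_of_adj [G.LocallyFinite] (hs : s.Nodup) (hlen : 3 ≤ s.length)
    (hdeg : ∀ x ∈ s, G.degree x ≤ 2) (hadj : ∀ x ∈ s, G.Adj x (s.formPerm x)) {a b : V}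
    (hab : G.Adj a b) : G.Adj (s.formPerm a) (s.formPerm b) := by
  have key : ∀ a b, a ∈ s → G.Adj a b → G.Adj (s.formPerm a) (s.formPerm b) := by
    intro a b ha hab
    have hne : s.formPerm a ≠ s.formPerm⁻¹ a := fun h ↦
      List.formPerm_apply_formPerm_ne hs hlen ha (by simp [h])
    rcases eq_or_eq_of_adj_of_degree_le_two (hadj a ha) (adj_formPerm_inv hadj ha) hne
      (hdeg a ha) hab with rfl | rfl
    · exact hadj _ (List.formPerm_apply_mem_of_mem ha)
    · simpa using (hadj a ha).symm
  by_cases ha : a ∈ s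
  · exact key a b ha hab
  by_cases hb : b ∈ s
  · exact (key b a hb hab.symm).symm
  · rwa [List.formPerm_apply_of_notMem ha, List.formPerm_apply_of_notMem hb]

theorem Walk.IsCycle.exists_iso_apply_ne [G.LocallyFinite] {v : V} {c : G.Walk v v}
    (hc : c.IsCycle) (hdeg : ∀ y ∈ c.support.tail, G.degree y ≤ 2) :
    ∃ φ : G ≃g G, ∃ x, φ x ≠ x := by
  set s := c.support.tail
  have hs : s.Nodup := hc.support_nodup
  have hlen : 3 ≤ s.length := by simpa [s] using hc.three_le_length
  have hadj : ∀ y ∈ s, G.Adj y (s.formPerm y) := fun y hy ↦ hc.adj_formPerm hy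
  -- `s.formPerm` rotates the cycle, and its inverse rotates the reversed cycle
  have hadj' : ∀ y ∈ s.reverse, G.Adj y (s.reverse.formPerm y) := fun y hy ↦ by
    simpa [List.formPerm_reverse] using adj_formPerm_inv hadj (List.mem_reverse.mp hy)
  refine ⟨⟨s.formPerm, fun {a b} ↦ ⟨fun hab ↦ ?_, adj_formPerm_of_adj hs hlen hdeg hadj⟩⟩,
    s.head (List.ne_nil_of_length_pos (by omega)), ?_⟩
  · simpa [List.formPerm_reverse] using
      adj_formPerm_of_adj (List.nodup_reverse.mpr hs) (by simpa using hlen) (by simpa using hdeg)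
        hadj' hab
  · exact (List.formPerm_apply_mem_ne_self_iff _ hs _ (List.head_mem _)).mpr (by omega)

end Rotation

theorem IsRegularOfDegree.exists_iso_apply_ne [Fintype V] [DecidableRel G.Adj] {d : ℕ}
    (h : G.IsRegularOfDegree d) (hd : d ≤ 2) (hV : 2 ≤ Fintype.card V) :
    ∃ φ : G ≃g G, ∃ v, φ v ≠ v := by
  classical
  obtain ⟨u, v, huv⟩ := Fintype.exists_pair_of_one_lt_card hV
  interval_cases d
  · have hno : ∀ a b, ¬ G.Adj a b := fun a b hab ↦ by
      simpa [h.degree_eq] using G.degree_pos_iff_exists_adj a |>.mpr ⟨b, hab⟩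
    exact ⟨swapIso (u := u) (v := v) fun w _ _ ↦ by simp [hno], u, by simp [swapIso, huv.symm]⟩
  · obtain ⟨w, hw⟩ := Finset.card_eq_one.mp (h u)
    have huw : G.Adj u w := by simp [← mem_neighborFinset, hw]
    obtain ⟨z, hz⟩ := Finset.card_eq_one.mp (h w)
    have hzu : u = z := by simpa [hz] using (G.mem_neighborFinset w u).mpr huw.symm
    refine ⟨swapIso (u := u) (v := w) fun y hyu hyw ↦ ?_, u, by simp [swapIso, huw.ne']⟩
    rw [← mem_neighborFinset, ← mem_neighborFinset, hw, hz, ← hzu]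
    simp [hyu, hyw]
  · have hcyc : G.IsCycles := fun x _ ↦ by
      rw [← coe_neighborFinset, Set.ncard_coe_finset]; exact h x
    obtain ⟨w, huw⟩ := (G.degree_pos_iff_exists_adj u).mp (by rw [h u]; norm_num)
    obtain ⟨x, c, hc, -⟩ := adj_and_reachable_delete_edges_iff_exists_cycle.mp
      ⟨huw, hcyc.reachable_deleteEdges huw⟩
    exact hc.exists_iso_apply_ne fun y _ ↦ (h y).le

theorem IsRegularOfDegree.even_card_mul [Fintype V] [DecidableRel G.Adj] {d : ℕ} (h : G.IsRegularOfDegree d) : Even (Fintype.card V * d) := by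
  have hsum := G.sum_degrees_eq_twice_card_edges
  simp only [h.degree_eq, Finset.sum_const, Finset.card_univ, smul_eq_mul] at hsum
  exact hsum ▸ even_two_mul _

end SimpleGraph

/-- A graph on `Fin r` given by the adjacencies `c i j` with `j < i` only: for `r ≤ 4` there are
few enough such codes for `decide` to enumerate them. -/
def GraphCode (r : ℕ) : Type := (i : Fin r) → Fin i → Bool

namespace GraphCode

variable {r : ℕ}

instance : Fintype (GraphCode r) := inferInstanceAs (Fintype ((i : Fin r) → Fin i → Bool))

def adj (c : GraphCode r) (i j : Fin r) : Bool :=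
  if h : j < i then c i ⟨j, h⟩ else if h : i < j then c j ⟨i, h⟩ else false

theorem adj_comm (c : GraphCode r) (i j : Fin r) : c.adj i j = c.adj j i := by
  unfold adj
  split_ifs <;> first | rfl | omega

theorem adj_self (c : GraphCode r) (i : Fin r) : c.adj i i = false := by
  simp [adj]

def toGraph (c : GraphCode r) : SimpleGraph (Fin r) where
  Adj i j := c.adj i j
  symm := ⟨fun i j h ↦ by rwa [c.adj_comm]⟩
  loopless := ⟨fun i ↦ by simp [adj_self]⟩

/-- The code whose edges are the pairs `(i, j)`, `j < i`, listed in `l`. -/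
def ofList (l : List (ℕ × ℕ)) : GraphCode r := fun i j ↦ decide ((i.val, j.val) ∈ l)

theorem exists_adj_eq (p : Fin r → Fin r → Bool) (hsymm : ∀ i j, p i j = p j i)
    (hirrefl : ∀ i, p i i = false) : ∃ c : GraphCode r, ∀ i j, c.adj i j = p i j := by
  refine ⟨fun i j ↦ p i ⟨j, j.2.trans i.2⟩, fun i j ↦ ?_⟩
  unfold adj
  split_ifs with h h'
  · rfl
  · exact hsymm j i
  · rw [show i = j by omega, hirrefl]

def RepresentsUniversalFree (reps : List (GraphCode r)) : Prop :=
  ∀ c : GraphCode r, (∀ i, ∃ j, i ≠ j ∧ c.adj i j = false) →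
    ∃ d ∈ reps, ∃ σ : Equiv.Perm (Fin r), ∀ i j, c.adj i j = d.adj (σ i) (σ j)

theorem RepresentsUniversalFree.exists_iso {reps : List (GraphCode r)}
    (h : RepresentsUniversalFree reps) {W : Type*} [Fintype W] (H : SimpleGraph W)
    (hW : Fintype.card W = r) (hH : ∀ w, ¬ H.IsUniversal w) :
    ∃ k : Fin reps.length, Nonempty (H ≃g reps[k].toGraph) := by
  classical
  let e : W ≃ Fin r := Fintype.equivFinOfCardEq hW
  obtain ⟨c, hc⟩ := exists_adj_eq (fun i j ↦ decide (H.Adj (e.symm i) (e.symm j)))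
    (fun i j ↦ by simp [H.adj_comm]) (fun i ↦ by simp)
  have hfree : ∀ i, ∃ j, i ≠ j ∧ c.adj i j = false := fun i ↦ by
    obtain ⟨w, hw, hnadj⟩ : ∃ w, e.symm i ≠ w ∧ ¬ H.Adj (e.symm i) w := by
      simpa [SimpleGraph.IsUniversal] using hH (e.symm i)
    exact ⟨e w, fun h ↦ hw (by simp [h]), by simp [hc, hnadj]⟩
  obtain ⟨d, hd, σ, hσ⟩ := h c hfree
  obtain ⟨k, hk, rfl⟩ := List.getElem_of_mem hd
  refine ⟨⟨k, hk⟩, ⟨⟨e.trans σ, fun {a b} ↦ ?_⟩⟩⟩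
  simp [toGraph, ← hσ, hc]

set_option maxRecDepth 100000 in
theorem exists_representsUniversalFree (hr : r ≤ 4) :
    ∃ reps : List (GraphCode r), reps.length ≤ r + 3 ∧ RepresentsUniversalFree reps := by
  interval_cases r
  · exact ⟨[ofList []], by simp, by unfold RepresentsUniversalFree; decide⟩
  · exact ⟨[], by simp, by unfold RepresentsUniversalFree; decide⟩
  · exact ⟨[ofList []], by simp, by unfold RepresentsUniversalFree; decide⟩
  · exact ⟨[ofList [], ofList [(1, 0)]], by simp, by unfold RepresentsUniversalFree; decide⟩
  -- the empty graph, `K₂`, `2K₂`, `P₃`, `P₄`, `K₃` and `C₄`, padded with isolated vertices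
  · refine ⟨[ofList [], ofList [(1, 0)], ofList [(1, 0), (3, 2)], ofList [(1, 0), (2, 1)],
      ofList [(1, 0), (2, 1), (3, 2)], ofList [(1, 0), (2, 0), (2, 1)],
      ofList [(1, 0), (2, 1), (3, 2), (3, 0)]], by simp, ?_⟩
    unfold RepresentsUniversalFree
    decide

end GraphCode

/-- There is no regular link-irregular graph on `n ≤ 9` vertices. -/
theorem no_small_regular_linkIrregular {V : Type*} [Fintype V]
    (G : SimpleGraph V) [DecidableRel G.Adj] (hn : 2 ≤ Fintype.card V)
    (hn9 : Fintype.card V ≤ 9) (r : ℕ) (hreg : G.IsRegularOfDegree r) :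
    ¬ G.LinkIrregular := by
  classical
  intro hG
  by_cases hsmall : Fintype.card V ≤ r + 3
  · obtain ⟨φ, v, hφ⟩ := hreg.compl.exists_iso_apply_ne (by omega) hn
    exact hφ (hG.compl_iso_apply_eq φ v)
  by_cases hr4 : r ≤ 4
  · obtain ⟨reps, hlen, hreps⟩ := GraphCode.exists_representsUniversalFree hr4
    have := hG.card_le_of_forall_iso (fun k : Fin reps.length ↦ reps[k].toGraph) fun u ↦
      hreps.exists_iso (G.link u) ((G.card_neighborSet_eq_degree u).trans (hreg u))
        fun x ↦ hG.not_isUniversal_link x (by rw [hreg x, hreg u])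
    simp only [Fintype.card_fin] at this
    omega
  · have h := hreg.even_card_mul
    rw [show Fintype.card V = 9 by omega, show r = 5 by omega] at h
    exact absurd h (by decide)
end

section
/- There exists a 7-regular link-irregular graph on 12 vertices, namely the graph on vertex set {0,...,11} with edge set {(3,4),(3,7),(3,1),(3,9),(3,5),(3,11),(3,2),(4,6),(4,5),(4,8),(4,11),(4,2),(4,0),(7,10),(7,2),(7,9),(7,1),(7,11),(7,8),(6,1),(6,11),(6,5),(6,10),(6,0),(6,9),(0,2),(0,5),(0,11),(0,10),(0,9),(2,8),(2,1),(2,9),(5,10),(5,11),(5,8),(10,9),(10,8),(10,1),(1,9),(1,8),(11,8)}. -/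
open SimpleGraph Finset

/-- The explicit 7-regular graph on 12 vertices disproving the conjecture. -/
def counterexampleGraph : SimpleGraph (Fin 12) :=
  SimpleGraph.fromEdgeSet
    {s(3,4), s(3,7), s(3,1), s(3,9), s(3,5), s(3,11), s(3,2),
     s(4,6), s(4,5), s(4,8), s(4,11), s(4,2), s(4,0),
     s(7,10), s(7,2), s(7,9), s(7,1), s(7,11), s(7,8),
     s(6,1), s(6,11), s(6,5), s(6,10), s(6,0), s(6,9),
     s(0,2), s(0,5), s(0,11), s(0,10), s(0,9),
     s(2,8), s(2,1), s(2,9),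
     s(5,10), s(5,11), s(5,8),
     s(10,9), s(10,8), s(10,1),
     s(1,9), s(1,8), s(11,8)}

/-- Adjacency matrix of `counterexampleGraph`. -/
def adjB : Fin 12 → Fin 12 → Bool :=
  ![![false,false,true,false,true,true,true,false,false,true,true,true],
    ![false,false,true,true,false,false,true,true,true,true,true,false],
    ![true,true,false,true,true,false,false,true,true,true,false,false],
    ![false,true,true,false,true,true,false,true,false,true,false,true],
    ![true,false,true,true,false,true,true,false,true,false,false,true],
    ![true,false,false,true,true,false,true,false,true,false,true,true],
    ![true,true,false,false,true,true,false,false,false,true,true,true],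
    ![false,true,true,true,false,false,false,false,true,true,true,true],
    ![false,true,true,false,true,true,false,true,false,false,true,true],
    ![true,true,true,true,false,false,true,true,false,false,true,false],
    ![true,true,false,false,false,true,true,true,true,true,false,false],
    ![true,false,false,true,true,true,true,true,true,false,false,false]]

def slowAdjDec : DecidableRel counterexampleGraph.Adj := fun a b => by
  unfold counterexampleGraph
  rw [SimpleGraph.fromEdgeSet_adj]
  simp only [Set.mem_insert_iff, Set.mem_singleton_iff]
  infer_instance

theorem adj_iff : ∀ a b : Fin 12, counterexampleGraph.Adj a b ↔ adjB a b = true := by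
  letI := slowAdjDec
  decide

instance : DecidableRel counterexampleGraph.Adj := fun a b =>
  decidable_of_iff _ (adj_iff a b).symm

instance linkAdjDec (v : Fin 12) : DecidableRel (counterexampleGraph.link v).Adj := fun a b => by
  unfold SimpleGraph.link
  exact inferInstanceAs (Decidable (counterexampleGraph.Adj a b))

/-! ### Two isomorphism invariants: the degree multiset and the number of
ordered triangles. -/

/-- The multiset of degrees of a finite graph (as `Nat.card`s of neighbor sets). -/
noncomputable def invB {V : Type*} [Fintype V] (G : SimpleGraph V) : Multiset ℕ :=
  (Finset.univ : Finset V).val.map (fun v => Nat.card (G.neighborSet v))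

/-- The set of ordered triangles of a graph. -/
def SimpleGraph.triSet {V : Type*} (G : SimpleGraph V) : Set (V × V × V) :=
  {t | G.Adj t.1 t.2.1 ∧ G.Adj t.1 t.2.2 ∧ G.Adj t.2.1 t.2.2}

/-- The number of ordered triangles. -/
noncomputable def invT {V : Type*} (G : SimpleGraph V) : ℕ := Nat.card G.triSet

theorem invB_iso_eq {V W : Type*} [Fintype V] [Fintype W] {G : SimpleGraph V}
    {H : SimpleGraph W} (e : G ≃g H) : invB G = invB H := by
  unfold invB
  have h1 : (Finset.univ : Finset W).val = (Finset.univ : Finset V).val.map e.toEquiv := by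
    rw [← Finset.map_univ_equiv e.toEquiv]
    rfl
  rw [h1, Multiset.map_map]
  apply Multiset.map_congr rfl
  intro v _
  exact Nat.card_congr (e.mapNeighborSet v)

theorem invT_iso_eq {V W : Type*} {G : SimpleGraph V} {H : SimpleGraph W} (e : G ≃g H) :
    invT G = invT H := by
  unfold invT
  apply Nat.card_congr
  apply Equiv.subtypeEquiv
    (Equiv.prodCongr e.toEquiv (Equiv.prodCongr e.toEquiv e.toEquiv))
  rintro ⟨a, b, c⟩
  simp only [SimpleGraph.triSet, Set.mem_setOf_eq, Equiv.prodCongr_apply, Prod.map]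
  constructor
  · rintro ⟨h1, h2, h3⟩
    exact ⟨e.map_rel_iff.2 h1, e.map_rel_iff.2 h2, e.map_rel_iff.2 h3⟩
  · rintro ⟨h1, h2, h3⟩
    exact ⟨e.map_rel_iff.1 h1, e.map_rel_iff.1 h2, e.map_rel_iff.1 h3⟩

/-! ### Computable versions -/

def invBc {V : Type*} [Fintype V] (G : SimpleGraph V) [∀ v, Fintype (G.neighborSet v)] :
    Multiset ℕ :=
  (Finset.univ : Finset V).val.map (fun v => G.degree v)

def invTc {V : Type*} [Fintype V] [DecidableEq V] (G : SimpleGraph V) [DecidableRel G.Adj] : ℕ :=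
  ((Finset.univ : Finset (V × V × V)).filter
    (fun t => G.Adj t.1 t.2.1 ∧ G.Adj t.1 t.2.2 ∧ G.Adj t.2.1 t.2.2)).card

theorem nat_card_neighborSet {V : Type*} (G : SimpleGraph V) (v : V)
    [Fintype (G.neighborSet v)] : Nat.card (G.neighborSet v) = G.degree v := by
  rw [Nat.card_eq_fintype_card, SimpleGraph.card_neighborSet_eq_degree]

theorem invB_eq_c {V : Type*} [Fintype V] (G : SimpleGraph V)
    [∀ v, Fintype (G.neighborSet v)] : invB G = invBc G := by
  unfold invB invBc
  apply Multiset.map_congr rfl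
  intro v _
  exact nat_card_neighborSet G v

theorem invT_eq_c {V : Type*} [Fintype V] [DecidableEq V] (G : SimpleGraph V)
    [DecidableRel G.Adj] : invT G = invTc G := by
  have h : G.triSet = ↑((Finset.univ : Finset (V × V × V)).filter
      (fun t => G.Adj t.1 t.2.1 ∧ G.Adj t.1 t.2.2 ∧ G.Adj t.2.1 t.2.2)) := by
    ext t
    simp [SimpleGraph.triSet]
  rw [invT, h, Nat.card_coe_set_eq, Set.ncard_coe_finset, invTc]

/-- Table of degree multisets of the twelve links. -/
def tableB : Fin 12 → Multiset ℕ :=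
  ![{2,3,3,3,4,4,5},
    {2,3,3,4,4,5,5},
    {2,3,3,4,4,4,4},
    {2,3,3,3,3,4,4},
    {3,3,3,3,4,5,5},
    {2,3,3,4,4,5,5},
    {2,3,3,3,4,4,5},
    {2,3,4,4,4,4,5},
    {3,3,3,3,3,3,4},
    {3,3,3,4,4,4,5},
    {3,3,3,3,4,4,4},
    {2,3,3,3,3,5,5}]

set_option maxHeartbeats 2000000 in
set_option maxRecDepth 100000 in
theorem invBc_eq_table : ∀ v : Fin 12, invBc (counterexampleGraph.link v) = tableB v := by
  decide

theorem tableB_almost_injective :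
    ∀ u v : Fin 12, u ≠ v → tableB u = tableB v →
      (u = 0 ∧ v = 6) ∨ (u = 6 ∧ v = 0) ∨ (u = 1 ∧ v = 5) ∨ (u = 5 ∧ v = 1) := by
  decide

set_option maxHeartbeats 2000000 in
set_option maxRecDepth 100000 in
theorem invTc_link0 : invTc (counterexampleGraph.link 0) = 36 := by decide

set_option maxHeartbeats 2000000 in
set_option maxRecDepth 100000 in
theorem invTc_link6 : invTc (counterexampleGraph.link 6) = 42 := by decide

set_option maxHeartbeats 2000000 in
set_option maxRecDepth 100000 in
theorem invTc_link1 : invTc (counterexampleGraph.link 1) = 48 := by decide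

set_option maxHeartbeats 2000000 in
set_option maxRecDepth 100000 in
theorem invTc_link5 : invTc (counterexampleGraph.link 5) = 42 := by decide

/-- There exists a 7-regular link-irregular graph on 12 vertices. -/
theorem exists_seven_regular_linkIrregular :
    (∀ v : Fin 12, Nat.card (counterexampleGraph.neighborSet v) = 7) ∧
      counterexampleGraph.LinkIrregular := by
  constructor
  · intro v
    rw [nat_card_neighborSet]
    revert v
    decide
  · rintro u v huv ⟨e⟩
    have hB : tableB u = tableB v := by
      rw [← invBc_eq_table u, ← invBc_eq_table v, ← invB_eq_c, ← invB_eq_c]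
      exact invB_iso_eq e
    have hT : invTc (counterexampleGraph.link u) = invTc (counterexampleGraph.link v) := by
      rw [← invT_eq_c, ← invT_eq_c]
      exact invT_iso_eq e
    rcases tableB_almost_injective u v huv hB with ⟨rfl, rfl⟩ | ⟨rfl, rfl⟩ | ⟨rfl, rfl⟩ |
      ⟨rfl, rfl⟩
    · rw [invTc_link0, invTc_link6] at hT; exact absurd hT (by decide)
    · rw [invTc_link6, invTc_link0] at hT; exact absurd hT (by decide)
    · rw [invTc_link1, invTc_link5] at hT; exact absurd hT (by decide)
    · rw [invTc_link5, invTc_link1] at hT; exact absurd hT (by decide)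
end
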